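/- arXiv:1105.0250 — 6 statements merged into one kernel-verified Lean document; each statement's English description precedes it below -/
import Mathlib

section
/- (Graded Artin–Tate) Let A ⊆ B ⊆ C be a tower of G-graded commutative rings, where G is a commutative group. Suppose A is Noetherian (as a graded ring), C is a finitely generated A-algebra (generated by finitely many homogeneous elements), and C is a finitely generated B-module (generated by finitely many homogeneous elements). Then B is a finitely generated A-algebra. -/
/-!
The ungraded Artin–Tate argument survives once "Noetherian" is weakened to "every homogeneous
ideal is finitely generated", all rings being treated as subrings of `C`. Split into homogeneous
components, the coefficients expressing the algebra generators of `C` and the products of the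
module generators `y` as `B`-combinations of `y` generate over `A` a graded subring `B₀ ≤ B` over
which `C` is spanned by `1` and `y`. A graded Hilbert basis theorem makes `B₀` graded Noetherian:
for `S[t]` with `t` homogeneous, the leading coefficients of a homogeneous ideal in degree `m`
form an increasing chain of homogeneous ideals of `S`. Hence the homogeneous `B₀`-submodule `B`
of the finite `B₀`-module `C` is finitely generated, by homogeneous elements, and these together
with the generators of `B₀` generate `B` over `A`.
-/

open DirectSum Submodule
open scoped Pointwise

section Subrings

variable {C : Type*} [CommRing C]

theorem Subring.mem_one_submodule {S : Subring C} {x : C} : x ∈ (1 : Submodule S C) ↔ x ∈ S := by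
  rw [Submodule.mem_one]
  exact ⟨fun ⟨y, hy⟩ => hy ▸ y.2, fun hx => ⟨⟨x, hx⟩, rfl⟩⟩

theorem Algebra.adjoin_toSubring_eq_closure (A : Subring C) (T : Set C) :
    (Algebra.adjoin A T).toSubring = Subring.closure (A ∪ T) := by
  rw [Algebra.adjoin_eq_ring_closure]
  congr 2
  exact Subtype.range_coe

theorem Subring.closure_insert_closure (t : C) (U : Set C) :
    Subring.closure (insert t (Subring.closure U : Set C)) = Subring.closure (insert t U) := by
  simp only [Set.insert_eq, Subring.closure_union, Subring.closure_eq]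

theorem Subring.closure_closure_union (U T : Set C) :
    Subring.closure (Subring.closure U ∪ T) = Subring.closure (U ∪ T) := by
  simp only [Subring.closure_union, Subring.closure_eq]

def Submodule.restrictSubring {S S' : Subring C} (h : S ≤ S') (N : Submodule S' C) :
    Submodule S C where
  toAddSubmonoid := N.toAddSubmonoid
  smul_mem' s _ hx := N.smul_mem ⟨s, h s.2⟩ hx

@[simp]
theorem Submodule.mem_restrictSubring {S S' : Subring C} (h : S ≤ S') {N : Submodule S' C}
    {x : C} : x ∈ N.restrictSubring h ↔ x ∈ N :=
  Iff.rfl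

theorem Submodule.span_le_restrictSubring_one {S R : Subring C} (h : S ≤ R) {T : Set C}
    (hT : T ⊆ R) : span S T ≤ (1 : Submodule R C).restrictSubring h :=
  span_le.2 fun _ hx => Subring.mem_one_submodule.2 (hT hx)

theorem Subring.eq_closure_union_of_span_eq {B₀ B : Subring C} (h : B₀ ≤ B) {T : Set C}
    (hT : span B₀ T = (1 : Submodule B C).restrictSubring h) : B = Subring.closure (B₀ ∪ T) := by
  have hTB (t : C) (ht : t ∈ T) : t ∈ B :=
    Subring.mem_one_submodule.1 ((mem_restrictSubring h).1 (hT ▸ subset_span ht))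
  refine le_antisymm (fun b hb => ?_) (Subring.closure_le.2 (Set.union_subset h hTB))
  have hB₀R : B₀ ≤ Subring.closure (B₀ ∪ T) := Set.subset_union_left.trans Subring.subset_closure
  rw [← Subring.mem_one_submodule, ← mem_restrictSubring h, ← hT] at hb
  exact Subring.mem_one_submodule.1 <| span_le_restrictSubring_one hB₀R
    (Set.subset_union_right.trans Subring.subset_closure) hb

def Submodule.subringColon {S : Subring C} (N : Submodule S C) (a : C) : Submodule S C :=
  1 ⊓ N.comap (LinearMap.mulRight S a)

theorem Submodule.mem_subringColon {S : Subring C} {N : Submodule S C} {a x : C} :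
    x ∈ N.subringColon a ↔ x ∈ S ∧ x * a ∈ N := by
  rw [subringColon, mem_inf, Subring.mem_one_submodule]
  rfl

theorem Submodule.map_mkQ_eq_map_subringColon {S : Subring C} {N M : Submodule S C} {a : C}
    (h : N ≤ S ∙ a ⊔ M) :
    N.map M.mkQ = ((N ⊔ M).subringColon a).map (M.mkQ ∘ₗ LinearMap.mulRight S a) := by
  apply le_antisymm
  · rintro _ ⟨n, hn, rfl⟩
    obtain ⟨_, hc, m, hm, rfl⟩ := mem_sup.1 (h hn)
    obtain ⟨c, rfl⟩ := mem_span_singleton.1 hc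
    refine ⟨c, mem_subringColon.2 ⟨c.2, ?_⟩, ?_⟩
    · rw [show (c : C) * a = c • a + m - m from (add_sub_cancel_right _ _).symm]
      exact sub_mem (mem_sup_left hn) (mem_sup_right hm)
    · rw [LinearMap.comp_apply, LinearMap.mulRight_apply, mkQ_apply, mkQ_apply,
        Submodule.Quotient.eq, Subring.smul_def]
      simpa using neg_mem hm
  · rintro _ ⟨x, hx, rfl⟩
    obtain ⟨n, hn, m, hm, hnm⟩ := mem_sup.1 (mem_subringColon.1 hx).2
    refine ⟨n, hn, ?_⟩
    simp only [mkQ_apply, LinearMap.coe_comp, Function.comp_apply, LinearMap.mulRight_apply,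
      ← hnm, Submodule.Quotient.eq]
    simpa using neg_mem hm

def powersSpan (S : Subring C) (t : C) (m : ℕ) : Submodule S C :=
  span S ((t ^ ·) '' Set.Iio m)

section powersSpan

variable {S : Subring C} {t : C}

theorem pow_mem_powersSpan {i m : ℕ} (h : i < m) : t ^ i ∈ powersSpan S t m :=
  subset_span ⟨i, h, rfl⟩

theorem powersSpan_mono : Monotone (powersSpan S t) := fun _ _ h =>
  span_mono (Set.image_mono (Set.Iio_subset_Iio h))

theorem pow_mul_mem_powersSpan {x : C} {m : ℕ} (hx : x ∈ powersSpan S t m) (k : ℕ) :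
    t ^ k * x ∈ powersSpan S t (m + k) := by
  suffices powersSpan S t m ≤ (powersSpan S t (m + k)).comap (LinearMap.mulLeft S (t ^ k)) from
    this hx
  refine span_le.2 fun _ hy => ?_
  obtain ⟨i, hi, rfl⟩ := hy
  rw [SetLike.mem_coe, mem_comap, LinearMap.mulLeft_apply, ← pow_add]
  exact pow_mem_powersSpan (by rw [Set.mem_Iio] at hi; omega)

theorem mem_powersSpan_succ {x : C} {m : ℕ} :
    x ∈ powersSpan S t (m + 1) ↔ ∃ c : S, ∃ p ∈ powersSpan S t m, x = c • t ^ m + p := by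
  rw [powersSpan, ← Finset.coe_range, Finset.range_add_one, Finset.coe_insert, Set.image_insert_eq,
    Finset.coe_range, mem_span_insert]
  rfl

theorem mem_closure_of_mem_powersSpan {x : C} {m : ℕ} (hx : x ∈ powersSpan S t m) :
    x ∈ Subring.closure (insert t (S : Set C)) := by
  have hle : S ≤ Subring.closure (insert t (S : Set C)) := fun _ hs =>
    Subring.subset_closure (Set.mem_insert_of_mem _ hs)
  have := span_le_restrictSubring_one hle ?_ hx
  · exact Subring.mem_one_submodule.1 ((mem_restrictSubring hle).1 this)
  rintro _ ⟨i, -, rfl⟩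
  exact pow_mem (Subring.subset_closure (Set.mem_insert t _)) i

theorem exists_mem_powersSpan_of_mem_closure {x : C}
    (hx : x ∈ Subring.closure (insert t (S : Set C))) : ∃ m, x ∈ powersSpan S t m := by
  rw [Set.insert_eq, Set.union_comm, ← Algebra.adjoin_toSubring_eq_closure,
    Subalgebra.mem_toSubring, Algebra.adjoin_singleton_eq_range_aeval] at hx
  obtain ⟨p, rfl⟩ := (AlgHom.mem_range _).1 hx
  refine ⟨p.natDegree + 1, ?_⟩
  rw [Polynomial.aeval_eq_sum_range]
  exact sum_mem fun i hi => smul_mem _ _ (pow_mem_powersSpan (Finset.mem_range.1 hi))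

variable {K : Submodule S C}

theorem pow_mul_mem_of_mul_mem (htK : ∀ x ∈ K, t * x ∈ K) (k : ℕ) {x : C} (hx : x ∈ K) :
    t ^ k * x ∈ K := by
  induction k with
  | zero => simpa using hx
  | succ k ih => rw [pow_succ', mul_assoc]; exact htK _ ih

theorem monotone_subringColon_powersSpan (htK : ∀ x ∈ K, t * x ∈ K) :
    Monotone fun m => (K ⊔ powersSpan S t m).subringColon (t ^ m) := by
  refine monotone_nat_of_le_succ fun m c hc => ?_
  obtain ⟨hcS, hc⟩ := mem_subringColon.1 hc
  obtain ⟨k, hk, p, hp, hkp⟩ := mem_sup.1 hc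
  refine mem_subringColon.2 ⟨hcS, ?_⟩
  rw [pow_succ', mul_left_comm, ← hkp, mul_add]
  exact add_mem (mem_sup_left (htK k hk))
    (mem_sup_right (by simpa using pow_mul_mem_powersSpan hp 1))

theorem inf_powersSpan_le_of_subringColon_le {S' : Subring C} (hSS' : S ≤ S') (ht : t ∈ S')
    (htK : ∀ x ∈ K, t * x ∈ K) {Q : Submodule S' C} {M : ℕ}
    (hM : ∀ m, (K ⊔ powersSpan S t m).subringColon (t ^ m) ≤
      (K ⊔ powersSpan S t M).subringColon (t ^ M))
    (hQ : K ⊓ powersSpan S t (M + 1) ≤ Q.restrictSubring hSS') (n : ℕ) :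
    K ⊓ powersSpan S t (M + 1 + n) ≤ Q.restrictSubring hSS' := by
  induction n with
  | zero => exact hQ
  | succ n ih =>
    rintro x ⟨hxK, hxP⟩
    obtain ⟨c, p, hp, rfl⟩ :=
      mem_powersSpan_succ.1 (show x ∈ powersSpan S t (M + 1 + n + 1) from hxP)
    have hc : (c : C) ∈ (K ⊔ powersSpan S t (M + 1 + n)).subringColon (t ^ (M + 1 + n)) :=
      mem_subringColon.2 ⟨c.2, by
        simpa [Subring.smul_def] using sub_mem (mem_sup_left hxK) (mem_sup_right hp)⟩
    -- `c` is also the leading coefficient of some `k ∈ K` of degree `≤ M`, and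
    -- `x - t ^ (n + 1) * k` has lower degree.
    obtain ⟨k, hk, p', hp', hkp'⟩ := mem_sup.1 (mem_subringColon.1 (hM _ hc)).2
    have hkQ : k ∈ Q.restrictSubring hSS' := by
      refine hQ ⟨hk, ?_⟩
      rw [eq_sub_of_add_eq hkp']
      exact sub_mem (smul_mem _ c (pow_mem_powersSpan (Nat.lt_succ_self M)))
        (powersSpan_mono M.le_succ hp')
    have hrest : c • t ^ (M + 1 + n) + p - t ^ (n + 1) * k = p + t ^ (n + 1) * p' := by
      rw [Subring.smul_def, smul_eq_mul]
      linear_combination (-(t ^ (n + 1))) * hkp'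
    have hrestK : c • t ^ (M + 1 + n) + p - t ^ (n + 1) * k ∈ K :=
      sub_mem hxK (pow_mul_mem_of_mul_mem htK _ hk)
    have hrestP : c • t ^ (M + 1 + n) + p - t ^ (n + 1) * k ∈ powersSpan S t (M + 1 + n) := by
      rw [hrest]
      refine add_mem hp (powersSpan_mono (by omega) (pow_mul_mem_powersSpan hp' (n + 1)))
    rw [← sub_add_cancel (c • t ^ (M + 1 + n) + p) (t ^ (n + 1) * k)]
    exact add_mem (ih ⟨hrestK, hrestP⟩) (Q.smul_mem ⟨_, pow_mem ht (n + 1)⟩ hkQ)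

end powersSpan

theorem exists_finset_forall_mem_span {B : Subring C} {y : Finset C}
    (hy : span B (y : Set C) = ⊤) (X : Finset C) :
    ∃ F : Finset C, ↑F ⊆ (B : Set C) ∧
      ∀ S : Subring C, ↑F ⊆ (S : Set C) → ∀ c ∈ X, c ∈ span S (y : Set C) := by
  classical
  have hcoeff (c : C) : ∃ f : C → B, ∑ j ∈ y, f j • j = c := by
    obtain ⟨f, -, hf⟩ := mem_span_finset.1 (hy ▸ mem_top : c ∈ span B (y : Set C))
    exact ⟨f, hf⟩
  choose f hf using hcoeff
  refine ⟨X.biUnion fun c => y.image fun j => (f c j : C), ?_, fun S hS c hc => ?_⟩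
  · intro b hb
    simp only [Finset.coe_biUnion, Finset.coe_image, Set.mem_iUnion, Set.mem_image] at hb
    obtain ⟨c, -, j, -, rfl⟩ := hb
    exact (f c j).2
  · rw [← hf c]
    refine sum_mem fun j hj => ?_
    have hcj : (f c j : C) ∈ S := hS (by simpa using ⟨c, hc, j, hj, rfl⟩)
    simpa [Subring.smul_def] using smul_mem (span S (y : Set C)) ⟨_, hcj⟩ (subset_span hj)

theorem span_insert_one_eq_top {A B₀ : Subring C} (hAB₀ : A ≤ B₀) {x y : Set C}
    (hx : Subring.closure (A ∪ x) = ⊤) (hxy : x ⊆ span B₀ y)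
    (hyy : ∀ a ∈ y, ∀ b ∈ y, a * b ∈ span B₀ y) : span B₀ (insert 1 y) = ⊤ := by
  set V := span B₀ (insert 1 y)
  have hyV : span B₀ y ≤ V := span_mono (Set.subset_insert _ _)
  have hVV : V * V ≤ V := by
    rw [span_mul_span, span_le]
    rintro _ ⟨a, ha, b, hb, rfl⟩
    rcases ha with rfl | ha
    · simpa using subset_span hb
    rcases hb with rfl | hb
    · simpa using subset_span (Set.mem_insert_of_mem _ ha)
    exact hyV (hyy a ha b hb)
  let R := (V.toSubalgebra (subset_span (Set.mem_insert 1 y))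
    fun _ _ ha hb => hVV (mul_mem_mul ha hb)).toSubring
  have hAV (a : C) (ha : a ∈ A) : a ∈ V := by
    simpa [Subring.smul_def] using smul_mem V ⟨a, hAB₀ ha⟩ (subset_span (Set.mem_insert 1 y))
  have hR : Subring.closure (A ∪ x) ≤ R :=
    Subring.closure_le.2 (Set.union_subset hAV (hxy.trans hyV))
  exact eq_top_iff.2 fun c _ => hR (hx ▸ Subring.mem_top c)

end Subrings

section Graded

variable {G C : Type*} [AddCommGroup G] [DecidableEq G] [CommRing C]
  {𝒜 : G → AddSubgroup C} [GradedRing 𝒜]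

theorem DirectSum.SetLike.IsHomogeneous.sup {S : Subring C} {N P : Submodule S C}
    (hN : SetLike.IsHomogeneous 𝒜 N) (hP : SetLike.IsHomogeneous 𝒜 P) :
    SetLike.IsHomogeneous 𝒜 (N ⊔ P) := by
  intro g x hx
  obtain ⟨n, hn, p, hp, rfl⟩ := mem_sup.1 hx
  rw [decompose_add, DirectSum.add_apply, AddMemClass.coe_add]
  exact add_mem (mem_sup_left (hN g hn)) (mem_sup_right (hP g hp))

theorem DirectSum.SetLike.IsHomogeneous.inf {S : Subring C} {N P : Submodule S C}
    (hN : SetLike.IsHomogeneous 𝒜 N) (hP : SetLike.IsHomogeneous 𝒜 P) :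
    SetLike.IsHomogeneous 𝒜 (N ⊓ P) :=
  fun g _ hx => ⟨hN g hx.1, hP g hx.2⟩

theorem coe_decompose_smul_mem {S : Subring C} (hS : SetLike.IsHomogeneous 𝒜 S)
    {N : Submodule S C} (s : S) {x : C} (hx : ∀ g, (decompose 𝒜 x g : C) ∈ N) (g : G) :
    (decompose 𝒜 (s • x) g : C) ∈ N := by
  classical
  rw [Subring.smul_def, smul_eq_mul, ← sum_support_decompose 𝒜 (s : C), Finset.sum_mul,
    decompose_sum, DFinsupp.finsetSum_apply, AddSubmonoidClass.coe_finsetSum]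
  refine sum_mem fun h _ => ?_
  rw [← sub_add_cancel g h, add_comm, coe_decompose_mul_add_of_left_mem 𝒜 (decompose 𝒜 _ h).2]
  exact smul_mem N ⟨_, hS h s.2⟩ (hx (g - h))

theorem isHomogeneous_span {S : Subring C} (hS : SetLike.IsHomogeneous 𝒜 S) {T : Set C}
    (hT : ∀ t ∈ T, SetLike.IsHomogeneousElem 𝒜 t) : SetLike.IsHomogeneous 𝒜 (span S T) := by
  intro g x hx
  induction hx using span_induction generalizing g with
  | mem t ht =>
    obtain ⟨i, hi⟩ := hT t ht
    rcases eq_or_ne i g with rfl | hne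
    · rw [decompose_of_mem_same 𝒜 hi]; exact subset_span ht
    · rw [decompose_of_mem_ne 𝒜 hi hne]; exact zero_mem _
  | zero => simp
  | add x y _ _ hx hy =>
    rw [decompose_add, DirectSum.add_apply, AddMemClass.coe_add]
    exact add_mem (hx g) (hy g)
  | smul s x _ hx => exact coe_decompose_smul_mem hS s hx g

theorem isHomogeneous_subringColon {S : Subring C} (hS : SetLike.IsHomogeneous 𝒜 S)
    {N : Submodule S C} (hN : SetLike.IsHomogeneous 𝒜 N) {a : C} {d : G} (ha : a ∈ 𝒜 d) :
    SetLike.IsHomogeneous 𝒜 (N.subringColon a) := by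
  intro g x hx
  rw [mem_subringColon] at hx ⊢
  refine ⟨hS g hx.1, ?_⟩
  rw [← coe_decompose_mul_add_of_right_mem 𝒜 ha]
  exact hN _ hx.2

theorem isHomogeneous_restrictSubring_one {S R : Subring C} (h : S ≤ R)
    (hR : SetLike.IsHomogeneous 𝒜 R) :
    SetLike.IsHomogeneous 𝒜 ((1 : Submodule R C).restrictSubring h) := fun g _ hx =>
  Subring.mem_one_submodule.2 (hR g (Subring.mem_one_submodule.1 hx))

theorem isHomogeneous_powersSpan {S : Subring C} (hS : SetLike.IsHomogeneous 𝒜 S) {t : C}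
    {d : G} (ht : t ∈ 𝒜 d) (m : ℕ) : SetLike.IsHomogeneous 𝒜 (powersSpan S t m) := by
  refine isHomogeneous_span hS fun _ hx => ?_
  obtain ⟨i, -, rfl⟩ := hx
  exact ⟨i • d, SetLike.pow_mem_graded i ht⟩

theorem isHomogeneous_closure_insert {S : Subring C} (hS : SetLike.IsHomogeneous 𝒜 S) {t : C}
    {d : G} (ht : t ∈ 𝒜 d) :
    SetLike.IsHomogeneous 𝒜 (Subring.closure (insert t (S : Set C))) := fun g _ hx =>
  have ⟨m, hm⟩ := exists_mem_powersSpan_of_mem_closure hx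
  mem_closure_of_mem_powersSpan (isHomogeneous_powersSpan hS ht m g hm)

variable (𝒜) in
open scoped Classical in
noncomputable def homogeneousComponents (F : Finset C) : Finset C :=
  F.biUnion fun x => (decompose 𝒜 x).support.image fun g => (decompose 𝒜 x g : C)

theorem isHomogeneousElem_of_mem_homogeneousComponents {F : Finset C} {x : C}
    (hx : x ∈ homogeneousComponents 𝒜 F) : SetLike.IsHomogeneousElem 𝒜 x := by
  simp only [homogeneousComponents, Finset.mem_biUnion, Finset.mem_image] at hx
  obtain ⟨y, -, g, -, rfl⟩ := hx
  exact ⟨g, (decompose 𝒜 y g).2⟩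

theorem homogeneousComponents_subset {σ : Type*} [SetLike σ C] {P : σ}
    (hP : SetLike.IsHomogeneous 𝒜 P) {F : Finset C} (hF : ↑F ⊆ (P : Set C)) :
    ↑(homogeneousComponents 𝒜 F) ⊆ (P : Set C) := by
  intro x hx
  simp only [homogeneousComponents, Finset.coe_biUnion, Set.mem_iUnion, Finset.coe_image,
    Set.mem_image] at hx
  obtain ⟨y, hy, g, -, rfl⟩ := hx
  exact hP g (hF hy)

theorem mem_of_homogeneousComponents_subset {σ : Type*} [SetLike σ C] [AddSubmonoidClass σ C]
    {P : σ} {F : Finset C} (hF : ↑(homogeneousComponents 𝒜 F) ⊆ (P : Set C)) {x : C}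
    (hx : x ∈ F) : x ∈ P := by
  classical
  rw [← sum_support_decompose 𝒜 x]
  refine sum_mem fun g hg => hF ?_
  simp only [homogeneousComponents, Finset.coe_biUnion, Set.mem_iUnion, Finset.coe_image,
    Set.mem_image]
  exact ⟨x, hx, g, hg, rfl⟩

theorem DirectSum.SetLike.IsHomogeneous.exists_finset_span_eq {S : Subring C} {N : Submodule S C}
    (hN : SetLike.IsHomogeneous 𝒜 N) (hfg : N.FG) :
    ∃ T : Finset C, ↑T ⊆ (N : Set C) ∧ (∀ x ∈ T, SetLike.IsHomogeneousElem 𝒜 x) ∧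
      span S (T : Set C) = N := by
  obtain ⟨F, rfl⟩ := hfg
  refine ⟨homogeneousComponents 𝒜 F, homogeneousComponents_subset hN subset_span,
    fun x => isHomogeneousElem_of_mem_homogeneousComponents, le_antisymm ?_ ?_⟩
  · exact span_le.2 (homogeneousComponents_subset hN subset_span)
  · exact span_le.2 fun x hx => mem_of_homogeneousComponents_subset subset_span hx

variable (𝒜) in
/-- The submodules `I ≤ 1` of the `S`-module `C` are the ideals of `S`, so this says that every
homogeneous ideal of `S` is finitely generated. -/
def IsGradedNoetherian (S : Subring C) : Prop :=
  ∀ I : Submodule S C, I ≤ 1 → SetLike.IsHomogeneous 𝒜 I → I.FG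

theorem isGradedNoetherian_of_forall_fg {A : Subring C} (hA : SetLike.IsHomogeneous 𝒜 A)
    (h : ∀ I : Ideal A,
      (∃ S : Set A, (∀ s ∈ S, ∃ g : G, (s : C) ∈ 𝒜 g) ∧ I = Ideal.span S) → I.FG) :
    IsGradedNoetherian 𝒜 A := by
  classical
  intro N hN1 hN
  set ι := Algebra.linearMap A C
  have hI : (N.comap ι).FG := by
    refine h _ ⟨{a | ι a ∈ N ∧ SetLike.IsHomogeneousElem 𝒜 (a : C)}, fun a ha => ha.2,
      le_antisymm (fun a ha => ?_) (Ideal.span_le.2 fun a ha => ha.1)⟩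
    have ha' : a = ∑ g ∈ (decompose 𝒜 (a : C)).support, ⟨_, hA g a.2⟩ :=
      Subtype.ext (by simp [sum_support_decompose])
    rw [ha']
    exact sum_mem fun g _ => Ideal.subset_span ⟨hN g ha, g, (decompose 𝒜 _ g).2⟩
  rw [← map_comap_eq_of_le (hN1.trans_eq one_eq_range)]
  exact hI.map ι

theorem IsGradedNoetherian.exists_le_of_monotone {S : Subring C} (hS : IsGradedNoetherian 𝒜 S)
    {L : ℕ → Submodule S C} (hL : Monotone L) (hL1 : ∀ m, L m ≤ 1)
    (hL_hom : ∀ m, SetLike.IsHomogeneous 𝒜 (L m)) : ∃ M, ∀ m, L m ≤ L M := by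
  have mem_iSup (x : C) : x ∈ ⨆ m, L m ↔ ∃ m, x ∈ L m := mem_iSup_of_chain ⟨L, hL⟩ x
  have hfg : (⨆ m, L m).FG := by
    refine hS _ (iSup_le hL1) fun g x hx => ?_
    obtain ⟨m, hm⟩ := (mem_iSup x).1 hx
    exact (mem_iSup _).2 ⟨m, hL_hom m g hm⟩
  obtain ⟨_, ⟨M, rfl⟩, hM⟩ :=
    (CompleteLattice.isCompactElement_iff_le_of_directed_sSup_le _ _).1 ((fg_iff_compact _).1 hfg)
      (Set.range L) (Set.range_nonempty L) hL.directed_le.directedOn_range le_rfl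
  exact ⟨M, fun m => (le_iSup L m).trans hM⟩

theorem IsGradedNoetherian.fg_of_le_span {S : Subring C} (hS_hom : SetLike.IsHomogeneous 𝒜 S)
    (hS : IsGradedNoetherian 𝒜 S) {Y : Set C} (hY_fin : Y.Finite)
    (hY : ∀ y ∈ Y, SetLike.IsHomogeneousElem 𝒜 y) {N : Submodule S C} (hNY : N ≤ span S Y)
    (hN : SetLike.IsHomogeneous 𝒜 N) : N.FG := by
  induction Y, hY_fin using Set.Finite.induction_on generalizing N with
  | empty =>
    rw [span_empty, le_bot_iff] at hNY
    exact hNY ▸ fg_bot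
  | @insert a Y _ _ ih =>
    have hY' (y) (hy : y ∈ Y) := hY y (Set.mem_insert_of_mem a hy)
    obtain ⟨d, hd⟩ := hY a (Set.mem_insert a Y)
    have hM := isHomogeneous_span hS_hom hY'
    rw [span_insert] at hNY
    refine fg_of_fg_map_of_fg_inf_ker (span S Y).mkQ ?_ ?_
    · rw [map_mkQ_eq_map_subringColon hNY]
      exact (hS _ inf_le_left (isHomogeneous_subringColon hS_hom (hN.sup hM) hd)).map _
    · rw [ker_mkQ]
      exact ih hY' inf_le_right (hN.inf hM)

theorem IsGradedNoetherian.closure_insert {S : Subring C} (hS_hom : SetLike.IsHomogeneous 𝒜 S)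
    (hS : IsGradedNoetherian 𝒜 S) {t : C} {d : G} (ht : t ∈ 𝒜 d) :
    IsGradedNoetherian 𝒜 (Subring.closure (insert t (S : Set C))) := by
  set S' := Subring.closure (insert t (S : Set C))
  have hSS' : S ≤ S' := fun _ hs => Subring.subset_closure (Set.mem_insert_of_mem _ hs)
  have htS' : t ∈ S' := Subring.subset_closure (Set.mem_insert t _)
  intro J hJ1 hJ
  set K := J.restrictSubring hSS'
  have hK : SetLike.IsHomogeneous 𝒜 K := hJ
  have htK (x : C) (hx : x ∈ K) : t * x ∈ K := J.smul_mem ⟨t, htS'⟩ hx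
  have hP := isHomogeneous_powersSpan hS_hom ht
  obtain ⟨M, hM⟩ := hS.exists_le_of_monotone (monotone_subringColon_powersSpan htK)
    (fun _ => inf_le_left)
    (fun m => isHomogeneous_subringColon hS_hom (hK.sup (hP m)) (SetLike.pow_mem_graded m ht))
  obtain ⟨F, hF⟩ := hS.fg_of_le_span hS_hom ((Set.finite_Iio (M + 1)).image _)
    (by rintro _ ⟨i, -, rfl⟩; exact ⟨i • d, SetLike.pow_mem_graded i ht⟩)
    (inf_le_right : K ⊓ powersSpan S t (M + 1) ≤ _) (hK.inf (hP (M + 1)))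
  refine ⟨F, le_antisymm (span_le.2 fun x hx => (hF ▸ subset_span hx : x ∈ K ⊓ _).1) ?_⟩
  intro x hx
  obtain ⟨m, hm⟩ := exists_mem_powersSpan_of_mem_closure (Subring.mem_one_submodule.1 (hJ1 hx))
  refine inf_powersSpan_le_of_subringColon_le (Q := span S' F) hSS' htS' htK hM ?_ m
    ⟨hx, powersSpan_mono (by omega) hm⟩
  exact hF ▸ span_le.2 fun _ hy => subset_span hy

theorem IsGradedNoetherian.closure_union_finset {S : Subring C}
    (hS_hom : SetLike.IsHomogeneous 𝒜 S) (hS : IsGradedNoetherian 𝒜 S) {s : Finset C}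
    (hs : ∀ x ∈ s, SetLike.IsHomogeneousElem 𝒜 x) :
    SetLike.IsHomogeneous 𝒜 (Subring.closure (S ∪ s)) ∧
      IsGradedNoetherian 𝒜 (Subring.closure (S ∪ s)) := by
  classical
  induction s using Finset.induction_on with
  | empty => simpa using ⟨hS_hom, hS⟩
  | insert t s _ ih =>
    obtain ⟨d, hd⟩ := hs t (Finset.mem_insert_self t s)
    obtain ⟨ih_hom, ih⟩ := ih fun x hx => hs x (Finset.mem_insert_of_mem hx)
    rw [Finset.coe_insert, Set.union_insert, ← Subring.closure_insert_closure]
    exact ⟨isHomogeneous_closure_insert ih_hom hd, ih.closure_insert ih_hom hd⟩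

theorem exists_homogeneous_finset_span_insert_one_eq_top {A B : Subring C}
    (hB : SetLike.IsHomogeneous 𝒜 B) {x y : Finset C} (hx : Algebra.adjoin A (x : Set C) = ⊤)
    (hy : span B (y : Set C) = ⊤) :
    ∃ s : Finset C, ↑s ⊆ (B : Set C) ∧ (∀ z ∈ s, SetLike.IsHomogeneousElem 𝒜 z) ∧
      span (Subring.closure ((A : Set C) ∪ s)) (insert 1 y : Set C) = ⊤ := by
  classical
  obtain ⟨F, hFB, hF⟩ := exists_finset_forall_mem_span hy (x ∪ y * y)
  refine ⟨homogeneousComponents 𝒜 F, homogeneousComponents_subset hB hFB,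
    fun _ => isHomogeneousElem_of_mem_homogeneousComponents, ?_⟩
  have hFB₀ := hF (Subring.closure ((A : Set C) ∪ homogeneousComponents 𝒜 F))
    fun _ => mem_of_homogeneousComponents_subset
      (Set.subset_union_right.trans Subring.subset_closure)
  exact span_insert_one_eq_top (Set.subset_union_left.trans Subring.subset_closure)
    (by rw [← Algebra.adjoin_toSubring_eq_closure, hx, Algebra.top_toSubring])
    (fun c hc => hFB₀ c (Finset.mem_union_left _ hc))
    (fun a ha b hb => hFB₀ _ (Finset.mem_union_right _ (Finset.mul_mem_mul ha hb)))

end Graded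

/-- Graded Artin–Tate: for a tower `A ⊆ B ⊆ C` of graded subrings of a `G`-graded
commutative ring `C`, with `A` graded-Noetherian, `C` a graded-finitely-generated
`A`-algebra and a graded-finitely-generated `B`-module, `B` is a graded-finitely-generated
`A`-algebra. -/
theorem stmt2 {G : Type*} [AddCommGroup G] [DecidableEq G]
    {C : Type*} [CommRing C]
    (𝒜 : G → AddSubgroup C) [GradedRing 𝒜]
    (A B : Subring C) (hAB : A ≤ B)
    -- `A` and `B` are graded subrings: stable under the homogeneous components
    (hAhom : ∀ x ∈ A, ∀ g : G, (DirectSum.decompose 𝒜 x g : C) ∈ A)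
    (hBhom : ∀ x ∈ B, ∀ g : G, (DirectSum.decompose 𝒜 x g : C) ∈ B)
    -- `A` is Noetherian as a graded ring: every homogeneous ideal is finitely generated
    (hAnoeth : ∀ I : Ideal A,
      (∃ S : Set A, (∀ s ∈ S, ∃ g : G, (s : C) ∈ 𝒜 g) ∧ I = Ideal.span S) → I.FG)
    -- `C` is an `A`-algebra generated by finitely many homogeneous elements
    (hCalg : ∃ s : Finset C, (∀ x ∈ s, ∃ g : G, x ∈ 𝒜 g) ∧
      Algebra.adjoin A (s : Set C) = ⊤)
    -- `C` is a `B`-module generated by finitely many homogeneous elements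
    (hCmod : ∃ s : Finset C, (∀ x ∈ s, ∃ g : G, x ∈ 𝒜 g) ∧
      Submodule.span B (s : Set C) = ⊤) :
    -- `B` is an `A`-algebra generated by finitely many homogeneous elements
    ∃ s : Finset C, (∀ x ∈ s, x ∈ B ∧ ∃ g : G, x ∈ 𝒜 g) ∧
      (Algebra.adjoin A (s : Set C)).toSubring = B := by
  classical
  obtain ⟨x, -, hx⟩ := hCalg
  obtain ⟨y, hy_hom, hy⟩ := hCmod
  have hA_hom : SetLike.IsHomogeneous 𝒜 A := fun g _ ha => hAhom _ ha g
  have hB_hom : SetLike.IsHomogeneous 𝒜 B := fun g _ hb => hBhom _ hb g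
  obtain ⟨s, hsB, hs_hom, hC⟩ := exists_homogeneous_finset_span_insert_one_eq_top hB_hom hx hy
  set B₀ := Subring.closure ((A : Set C) ∪ s)
  have hB₀B : B₀ ≤ B := Subring.closure_le.2 (Set.union_subset hAB hsB)
  obtain ⟨hB₀_hom, hB₀⟩ :=
    (isGradedNoetherian_of_forall_fg hA_hom hAnoeth).closure_union_finset hA_hom hs_hom
  have hB_fg := hB₀.fg_of_le_span hB₀_hom (y.finite_toSet.insert 1)
    (by rintro _ (rfl | h); exacts [⟨0, SetLike.one_mem_graded 𝒜⟩, hy_hom _ h])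
    (hC ▸ le_top) (isHomogeneous_restrictSubring_one hB₀B hB_hom)
  obtain ⟨T, hTB, hT_hom, hT⟩ :=
    (isHomogeneous_restrictSubring_one hB₀B hB_hom).exists_finset_span_eq hB_fg
  refine ⟨s ∪ T, fun z hz => ?_, ?_⟩
  · rcases Finset.mem_union.1 hz with hz | hz
    exacts [⟨hsB hz, hs_hom z hz⟩, ⟨Subring.mem_one_submodule.1 (hTB hz), hT_hom z hz⟩]
  rw [Algebra.adjoin_toSubring_eq_closure, Subring.eq_closure_union_of_span_eq hB₀B hT,
    Finset.coe_union, ← Set.union_assoc, Subring.closure_closure_union]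
end

section
/- Let k be a graded field (a G-graded commutative ring in which every nonzero homogeneous element is invertible) and g ∈ G. In the graded polynomial ring k[g⁻¹T] (the ring k[T] where T is declared homogeneous of degree g), Euclidean division holds for homogeneous elements: for homogeneous A, B ∈ k[g⁻¹T] with B ≠ 0, there exists a unique pair (Q, R) of homogeneous elements with A = BQ + R and deg(R) < deg(B). -/
/-!
The leading coefficient of a nonzero homogeneous `B` is a nonzero homogeneous element of `k`,
hence a unit, so ordinary division by `B` has a unique quotient and remainder. Projecting
`A = B * Q + R` onto the homogeneous component of `A` (coefficientwise, via the grading of `k`)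
gives another such division, because multiplication by a homogeneous `B` shifts homogeneous
components; by uniqueness `Q` and `R` equal their projections, so they are homogeneous.
-/

open Polynomial

/-- A polynomial `P = Σ a_n T^n` over a `G`-graded ring `k` is homogeneous in
`k[g⁻¹T]` (where `T` has degree `g`) if, for some `h : G`, each nonzero coefficient
`a_n` is homogeneous of degree `h - n • g`. -/
def GradedHomog {G : Type*} [AddCommGroup G] {k : Type*} [CommRing k]
    (𝒜 : G → AddSubgroup k) (g : G) (P : Polynomial k) : Prop :=
  ∃ h : G, ∀ n : ℕ, P.coeff n ≠ 0 → P.coeff n ∈ 𝒜 (h - (n : ℤ) • g)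

namespace Polynomial

section DivModUnitLeadingCoeff

variable {R : Type*} [CommRing R] [Nontrivial R] {g : R[X]}

theorem divMod_eq_iff_of_isUnit_leadingCoeff (hg : IsUnit g.leadingCoeff) (f q r : R[X]) :
    f = g * q + r ∧ r.degree < g.degree ↔
      (q, r) = (hg.unit⁻¹ • (f /ₘ (hg.unit⁻¹ • g)), f %ₘ (hg.unit⁻¹ • g)) := by
  have hmonic := monic_of_isUnit_leadingCoeff_inv_smul hg
  have hdeg : (hg.unit⁻¹ • g).degree = g.degree :=
    degree_smul_of_smul_regular _ (isSMulRegular_of_group _)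
  have hmul (p : R[X]) : (hg.unit⁻¹ • g) * (hg.unit • p) = g * p := by
    rw [smul_mul_smul_comm, inv_mul_cancel, one_smul]
  constructor
  · rintro ⟨rfl, hr⟩
    obtain ⟨hdiv, hmod⟩ := div_modByMonic_unique (hg.unit • q) r hmonic
      ⟨by rw [hmul, add_comm], hdeg ▸ hr⟩
    rw [hdiv, hmod, inv_smul_smul]
  · intro h
    obtain ⟨rfl, rfl⟩ := Prod.mk.inj h
    refine ⟨?_, hdeg ▸ degree_modByMonic_lt f hmonic⟩
    rw [← hmul, smul_inv_smul, add_comm, modByMonic_add_div]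

theorem existsUnique_divMod_of_isUnit_leadingCoeff (hg : IsUnit g.leadingCoeff) (f : R[X]) :
    ∃! qr : R[X] × R[X], f = g * qr.1 + qr.2 ∧ qr.2.degree < g.degree :=
  ⟨_, (divMod_eq_iff_of_isUnit_leadingCoeff hg f _ _).2 rfl,
    fun _ h => (divMod_eq_iff_of_isUnit_leadingCoeff hg f _ _).1 h⟩

end DivModUnitLeadingCoeff

section GradedCoefficients

variable {G : Type*} [AddCommGroup G] {k : Type*} [Semiring k]
  {σ : Type*} [SetLike σ k] [AddSubmonoidClass σ k] (𝒜 : G → σ) (g : G)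

/-- Homogeneity of degree `h` in `k[g⁻¹T]`, where `T` has degree `g`. -/
def IsHomogOfDeg (h : G) (P : k[X]) : Prop :=
  ∀ n : ℕ, P.coeff n ≠ 0 → P.coeff n ∈ 𝒜 (h - (n : ℤ) • g)

variable [DecidableEq G] [GradedRing 𝒜]

noncomputable def homogComponent (h : G) (P : k[X]) : k[X] :=
  ⟨.ofCoeff <| Finsupp.onFinset P.support
    (fun n => GradedRing.proj 𝒜 (h - (n : ℤ) • g) (P.coeff n))
    fun n hn => mem_support_iff.2 fun h0 => hn (by rw [h0, map_zero])⟩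

variable {𝒜 g}

@[simp]
theorem coeff_homogComponent (h : G) (P : k[X]) (n : ℕ) :
    (homogComponent 𝒜 g h P).coeff n = GradedRing.proj 𝒜 (h - (n : ℤ) • g) (P.coeff n) :=
  rfl

theorem isHomogOfDeg_homogComponent (h : G) (P : k[X]) :
    IsHomogOfDeg 𝒜 g h (homogComponent 𝒜 g h P) := fun n _ => by
  rw [coeff_homogComponent, GradedRing.proj_apply]
  exact SetLike.coe_mem _

theorem homogComponent_add (h : G) (P Q : k[X]) :
    homogComponent 𝒜 g h (P + Q) = homogComponent 𝒜 g h P + homogComponent 𝒜 g h Q := by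
  ext n
  simp only [coeff_homogComponent, coeff_add, map_add]

theorem degree_homogComponent_le (h : G) (P : k[X]) :
    (homogComponent 𝒜 g h P).degree ≤ P.degree :=
  (degree_le_iff_coeff_zero _ _).2 fun n hn => by
    rw [coeff_homogComponent, coeff_eq_zero_of_degree_lt hn, map_zero]

theorem IsHomogOfDeg.homogComponent_eq {h : G} {P : k[X]} (hP : IsHomogOfDeg 𝒜 g h P) :
    homogComponent 𝒜 g h P = P := by
  ext n
  by_cases hn : P.coeff n = 0
  · rw [coeff_homogComponent, hn, map_zero]
  · rw [coeff_homogComponent, GradedRing.proj_apply, DirectSum.decompose_of_mem_same 𝒜 (hP n hn)]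

theorem IsHomogOfDeg.homogComponent_mul_left {b : G} {B : k[X]} (hB : IsHomogOfDeg 𝒜 g b B)
    (h : G) (Q : k[X]) :
    homogComponent 𝒜 g h (B * Q) = B * homogComponent 𝒜 g (h - b) Q := by
  ext n
  simp only [coeff_homogComponent, coeff_mul, map_sum]
  refine Finset.sum_congr rfl fun ij hij => ?_
  by_cases hBi : B.coeff ij.1 = 0
  · rw [hBi, zero_mul, map_zero, zero_mul]
  · have hdeg : (b - (ij.1 : ℤ) • g) + ((h - b) - (ij.2 : ℤ) • g) = h - (n : ℤ) • g := by
      rw [← Finset.HasAntidiagonal.mem_antidiagonal.1 hij]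
      push_cast
      rw [add_smul]
      abel
    rw [GradedRing.proj_apply, GradedRing.proj_apply, ← hdeg,
      DirectSum.coe_decompose_mul_add_of_left_mem 𝒜 (hB ij.1 hBi)]

end GradedCoefficients

end Polynomial

/-- Euclidean division of homogeneous polynomials over a graded field. -/
theorem stmt3 {G : Type*} [AddCommGroup G] [DecidableEq G] {k : Type*} [CommRing k] [Nontrivial k]
    (𝒜 : G → AddSubgroup k) [GradedRing 𝒜]
    -- `k` is a graded field: every nonzero homogeneous element is invertible
    (hfield : ∀ (x : k) (g' : G), x ∈ 𝒜 g' → x ≠ 0 → IsUnit x)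
    (g : G) (A B : Polynomial k)
    (hA : GradedHomog 𝒜 g A) (hB : GradedHomog 𝒜 g B) (hB0 : B ≠ 0) :
    ∃! QR : Polynomial k × Polynomial k,
      GradedHomog 𝒜 g QR.1 ∧ GradedHomog 𝒜 g QR.2 ∧
        A = B * QR.1 + QR.2 ∧ QR.2.degree < B.degree := by
  obtain ⟨a, hA⟩ := hA
  obtain ⟨b, hB⟩ := hB
  have hlc : B.leadingCoeff ≠ 0 := leadingCoeff_ne_zero.2 hB0
  obtain ⟨⟨Q, R⟩, ⟨hdiv, hdeg⟩, huniq⟩ :=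
    existsUnique_divMod_of_isUnit_leadingCoeff (hfield _ _ (hB _ hlc) hlc) A
  have hdiv_homog : A = B * homogComponent 𝒜 g (a - b) Q + homogComponent 𝒜 g a R := by
    conv_lhs => rw [← IsHomogOfDeg.homogComponent_eq hA, hdiv]
    rw [homogComponent_add, IsHomogOfDeg.homogComponent_mul_left hB]
  obtain ⟨hQ, hR⟩ := Prod.mk.inj <| huniq (_, _)
    ⟨hdiv_homog, (degree_homogComponent_le a R).trans_lt hdeg⟩
  refine ⟨(Q, R), ⟨⟨a - b, ?_⟩, ⟨a, ?_⟩, hdiv, hdeg⟩, fun QR h => huniq QR ⟨h.2.2.1, h.2.2.2⟩⟩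
  · exact hQ ▸ isHomogOfDeg_homogComponent (a - b) Q
  · exact hR ▸ isHomogOfDeg_homogComponent a R
end

section
/- Let k be a graded field and g ∈ G. Every homogeneous (graded) ideal of the graded polynomial ring k[g⁻¹T] is generated by a single homogeneous element. -/
open Polynomial

/-- Every homogeneous ideal of `k[g⁻¹T]` over a graded field `k` is generated by a
single homogeneous element. -/
theorem stmt4 {G : Type*} [AddCommGroup G] [DecidableEq G] {k : Type*} [CommRing k] [Nontrivial k]
    (𝒜 : G → AddSubgroup k) [GradedRing 𝒜]
    (hfield : ∀ (x : k) (g' : G), x ∈ 𝒜 g' → x ≠ 0 → IsUnit x)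
    (g : G) (I : Ideal (Polynomial k))
    (hI : ∃ S : Set (Polynomial k), (∀ s ∈ S, GradedHomog 𝒜 g s) ∧ I = Ideal.span S) :
    ∃ p : Polynomial k, GradedHomog 𝒜 g p ∧ I = Ideal.span {p} := by
  classical
  obtain ⟨S, hShom, rfl⟩ := hI
  by_cases hT : ∃ q : Polynomial k, GradedHomog 𝒜 g q ∧ q ∈ Ideal.span S ∧ q ≠ 0
  · -- choose P of minimal natDegree among nonzero homogeneous elements of the ideal
    have hne : {n : ℕ | ∃ q : Polynomial k,
        GradedHomog 𝒜 g q ∧ q ∈ Ideal.span S ∧ q ≠ 0 ∧ q.natDegree = n}.Nonempty := by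
      obtain ⟨q, h1, h2, h3⟩ := hT
      exact ⟨q.natDegree, q, h1, h2, h3, rfl⟩
    obtain ⟨P, hPhom, hPI, hP0, hPdeg⟩ := Nat.sInf_mem hne
    have hmin : ∀ q : Polynomial k, GradedHomog 𝒜 g q → q ∈ Ideal.span S → q ≠ 0 →
        P.natDegree ≤ q.natDegree := by
      intro q h1 h2 h3
      rw [hPdeg]
      exact Nat.sInf_le ⟨q, h1, h2, h3, rfl⟩
    obtain ⟨hP, hPmem⟩ := hPhom
    have haP : P.leadingCoeff ∈ 𝒜 (hP - (P.natDegree : ℤ) • g) := by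
      have := hPmem P.natDegree (by rw [coeff_natDegree]; exact leadingCoeff_ne_zero.mpr hP0)
      rwa [coeff_natDegree] at this
    have haU : IsUnit P.leadingCoeff :=
      hfield _ _ haP (leadingCoeff_ne_zero.mpr hP0)
    have key : ∀ d : ℕ, ∀ s : Polynomial k, s.natDegree ≤ d → GradedHomog 𝒜 g s →
        s ∈ Ideal.span S → s ∈ Ideal.span {P} := by
      intro d
      induction d using Nat.strong_induction_on with
      | _ d IH =>
        intro s hsd hshom hsI
        by_cases hs0 : s = 0
        · simp [hs0]
        have hdPs : P.natDegree ≤ s.natDegree := hmin s hshom hsI hs0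
        obtain ⟨hs, hsmem⟩ := hshom
        have hbs : s.leadingCoeff ∈ 𝒜 (hs - (s.natDegree : ℤ) • g) := by
          have := hsmem s.natDegree (by rw [coeff_natDegree]; exact leadingCoeff_ne_zero.mpr hs0)
          rwa [coeff_natDegree] at this
        set a := P.leadingCoeff with ha
        set b := s.leadingCoeff with hb
        set m := s.natDegree - P.natDegree with hm
        set s' := C a * s - C b * P * X ^ m with hs'def
        have hs'I : s' ∈ Ideal.span S :=
          sub_mem (Ideal.mul_mem_left _ _ hsI)
            (Ideal.mul_mem_right _ _ (Ideal.mul_mem_left _ _ hPI))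
        have hcoeff : ∀ n : ℕ,
            s'.coeff n = a * s.coeff n - (if m ≤ n then b * P.coeff (n - m) else 0) := by
          intro n
          simp [hs'def, coeff_mul_X_pow', apply_ite (fun x : k => b * x)]
        have hs'hom : GradedHomog 𝒜 g s' := by
          refine ⟨hP + hs - (P.natDegree : ℤ) • g, fun n _ => ?_⟩
          rw [hcoeff n]
          refine sub_mem ?_ ?_
          · rcases eq_or_ne (s.coeff n) 0 with h | h
            · simp only [h, mul_zero]; exact zero_mem _
            · have e1 : (hP + hs - (P.natDegree : ℤ) • g) - (n : ℤ) • g =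
                  (hP - (P.natDegree : ℤ) • g) + (hs - (n : ℤ) • g) := by abel
              rw [e1]
              exact SetLike.mul_mem_graded haP (hsmem n h)
          · split_ifs with hmn
            · rcases eq_or_ne (P.coeff (n - m)) 0 with h | h
              · simp only [h, mul_zero]; exact zero_mem _
              · have hc1 : ((n - m : ℕ) : ℤ) = (n : ℤ) - (s.natDegree : ℤ) + P.natDegree := by
                  omega
                have e2 : (hP + hs - (P.natDegree : ℤ) • g) - (n : ℤ) • g =
                    (hs - (s.natDegree : ℤ) • g) + (hP - ((n - m : ℕ) : ℤ) • g) := by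
                  rw [hc1, add_smul, sub_smul]
                  abel
                rw [e2]
                exact SetLike.mul_mem_graded hbs (hPmem (n - m) h)
            · exact zero_mem _
        have hvanish : ∀ n, s.natDegree ≤ n → s'.coeff n = 0 := by
          intro n hn
          rw [hcoeff n, if_pos (by omega)]
          rcases hn.lt_or_eq with hlt | heq
          · rw [coeff_eq_zero_of_natDegree_lt hlt,
              coeff_eq_zero_of_natDegree_lt (show P.natDegree < n - m by omega)]
            ring
          · have hnm : n - m = P.natDegree := by omega
            rw [hnm, ← heq, coeff_natDegree, coeff_natDegree, ← ha, ← hb]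
            ring
        have hPmemP : P ∈ Ideal.span ({P} : Set (Polynomial k)) :=
          Ideal.subset_span (Set.mem_singleton P)
        have hCas : C a * s ∈ Ideal.span ({P} : Set (Polynomial k)) := by
          by_cases hs'0 : s' = 0
          · have heq : C a * s = C b * P * X ^ m := by
              have := sub_eq_zero.mp (hs'def ▸ hs'0)
              simpa using this
            rw [heq]
            exact Ideal.mul_mem_right _ _ (Ideal.mul_mem_left _ _ hPmemP)
          · have hdeg : s'.natDegree < s.natDegree := by
              by_contra hle
              push_neg at hle
              exact (leadingCoeff_ne_zero.mpr hs'0) (by rw [leadingCoeff]; exact hvanish _ hle)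
            have hs'P : s' ∈ Ideal.span ({P} : Set (Polynomial k)) :=
              IH s'.natDegree (lt_of_lt_of_le hdeg hsd) s' le_rfl hs'hom hs'I
            have : C a * s = s' + C b * P * X ^ m := by rw [hs'def]; ring
            rw [this]
            exact add_mem hs'P (Ideal.mul_mem_right _ _ (Ideal.mul_mem_left _ _ hPmemP))
        obtain ⟨u, hu⟩ := isUnit_C.mpr haU
        have hrw : s = (↑u⁻¹ : Polynomial k) * (C a * s) := by
          rw [← hu, ← mul_assoc, Units.inv_mul, one_mul]
        rw [hrw]
        exact Ideal.mul_mem_left _ _ hCas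
    refine ⟨P, ⟨hP, hPmem⟩, le_antisymm ?_ ?_⟩
    · rw [Ideal.span_le]
      intro s hsS
      exact key s.natDegree s le_rfl (hShom s hsS) (Ideal.subset_span hsS)
    · rw [Ideal.span_le, Set.singleton_subset_iff]
      exact hPI
  · refine ⟨0, ⟨0, fun n hn => absurd (coeff_zero n) hn⟩, ?_⟩
    have hall : ∀ s ∈ S, s = (0 : Polynomial k) := by
      intro s hsS
      by_contra h0
      exact hT ⟨s, hShom s hsS, Ideal.subset_span hsS, h0⟩
    have h1 : Ideal.span S = ⊥ := Ideal.span_eq_bot.mpr hall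
    rw [h1, Ideal.span_singleton_eq_bot.mpr rfl]
end

section
/- Let k be a graded field, n ≥ 1, and g = (g_1, …, g_n) ∈ Gⁿ, where ρ(k) denotes the set of degrees of nonzero homogeneous elements of k. If g is independent of ρ(k), i.e. its image in the ℤ-module G/⟨ρ(k)⟩ is free, then the graded fraction field k(g⁻¹T) is a finitely generated graded k-algebra; conversely, if some g_i is dependent on ρ(k), then k(g⁻¹T) is not a finitely generated graded k-algebra. -/
open MvPolynomial

variable {G : Type*} [AddCommGroup G] {k : Type*} [CommRing k]

/-- The subgroup `⟨ρ(k)⟩` of `G` generated by the degrees of the nonzero homogeneous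
elements of the graded ring `k`. -/
def degSubgroup (𝒜 : G → AddSubgroup k) : AddSubgroup G :=
  AddSubgroup.closure {g : G | ∃ x : k, x ∈ 𝒜 g ∧ x ≠ 0}

/-- Homogeneity in `k[g⁻¹T] = k[T_1,…,T_n]` with `T_i` of degree `gv i`. -/
def MvHomog {n : ℕ} (𝒜 : G → AddSubgroup k) (gv : Fin n → G)
    (f : MvPolynomial (Fin n) k) : Prop :=
  ∃ h : G, ∀ d : Fin n →₀ ℕ, coeff d f ≠ 0 → coeff d f ∈ 𝒜 (h - ∑ i, (d i) • gv i)

/-- The multiplicative set of nonzero homogeneous elements of `k[g⁻¹T]` (as the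
submonoid it generates). -/
noncomputable def homogMonoid {n : ℕ} (𝒜 : G → AddSubgroup k) (gv : Fin n → G) :
    Submonoid (MvPolynomial (Fin n) k) :=
  Submonoid.closure {f | f ≠ 0 ∧ MvHomog 𝒜 gv f}

/-- An element of the graded fraction field `k(g⁻¹T)` is homogeneous when it can be
written as a quotient of homogeneous elements. -/
def LocHomog {n : ℕ} (𝒜 : G → AddSubgroup k) (gv : Fin n → G)
    (x : Localization (homogMonoid 𝒜 gv)) : Prop :=
  ∃ p q : MvPolynomial (Fin n) k, MvHomog 𝒜 gv p ∧ MvHomog 𝒜 gv q ∧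
    q ∈ homogMonoid 𝒜 gv ∧
    x * algebraMap (MvPolynomial (Fin n) k) (Localization (homogMonoid 𝒜 gv)) q =
      algebraMap (MvPolynomial (Fin n) k) (Localization (homogMonoid 𝒜 gv)) p

/-- `k(g⁻¹T)` is a finitely generated graded `k`-algebra: generated by finitely
many homogeneous elements. -/
def GradedFG {n : ℕ} (𝒜 : G → AddSubgroup k) (gv : Fin n → G) : Prop :=
  ∃ s : Finset (Localization (homogMonoid 𝒜 gv)),
    (∀ x ∈ s, LocHomog 𝒜 gv x) ∧ Algebra.adjoin k (s : Set (Localization (homogMonoid 𝒜 gv))) = ⊤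
section Deg


/-- inverse of a homogeneous unit is homogeneous of opposite degree -/
lemma inv_homog [DecidableEq G] [Nontrivial k] (𝒜 : G → AddSubgroup k) [GradedRing 𝒜] {x : k} {g : G} (hx : x ∈ 𝒜 g) (hu : IsUnit x) :
    ∃ y : k, y ∈ 𝒜 (-g) ∧ x * y = 1 := by
  classical
  obtain ⟨u, rfl⟩ := hu
  refine ⟨(DirectSum.decompose 𝒜 ((u⁻¹ : kˣ) : k) (-g) : k), SetLike.coe_mem _, ?_⟩
  have h1 : (1:k) = ∑ h ∈ (DirectSum.decompose 𝒜 ((u⁻¹ : kˣ) : k)).support,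
      (u:k) * (DirectSum.decompose 𝒜 ((u⁻¹ : kˣ) : k) h : k) := by
    rw [← Finset.mul_sum, DirectSum.sum_support_decompose]
    exact (Units.mul_inv u).symm
  have h2 := congrArg (fun z => (DirectSum.decompose 𝒜 z 0 : k)) h1
  simp only at h2
  rw [DirectSum.decompose_of_mem_same 𝒜 (SetLike.one_mem_graded 𝒜),
    DirectSum.decompose_sum, DFinsupp.finset_sum_apply] at h2
  push_cast at h2
  rw [Finset.sum_eq_single (-g)] at h2
  · by_cases hmem : (-g) ∈ (DirectSum.decompose 𝒜 ((u⁻¹ : kˣ) : k)).support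
    · have hm0 : ((u:k) * (DirectSum.decompose 𝒜 ((u⁻¹ : kˣ) : k) (-g) : k)) ∈ 𝒜 0 := by
        simpa using SetLike.mul_mem_graded hx
          (SetLike.coe_mem (DirectSum.decompose 𝒜 ((u⁻¹ : kˣ) : k) (-g)))
      rw [DirectSum.decompose_of_mem_same 𝒜 hm0] at h2
      exact h2.symm
    · rw [DFinsupp.notMem_support_iff] at hmem
      rw [hmem] at h2
      simp at h2
  · intro b _ hb
    refine DirectSum.decompose_of_mem_ne 𝒜 (SetLike.mul_mem_graded hx
      (SetLike.coe_mem (DirectSum.decompose 𝒜 ((u⁻¹ : kˣ) : k) b))) ?_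
    intro h
    exact hb (eq_neg_of_add_eq_zero_right h)
  · intro hmem
    rw [DFinsupp.notMem_support_iff] at hmem
    rw [hmem]
    simp
end Deg

lemma exists_of_mem_degSubgroup [DecidableEq G] [Nontrivial k] {𝒜 : G → AddSubgroup k} [GradedRing 𝒜]
    (hfield : ∀ (x : k) (g' : G), x ∈ 𝒜 g' → x ≠ 0 → IsUnit x)
    {g : G} (hg : g ∈ degSubgroup 𝒜) : ∃ x : k, x ∈ 𝒜 g ∧ x ≠ 0 := by
  let D' : AddSubgroup G :=
    { carrier := {g : G | ∃ x : k, x ∈ 𝒜 g ∧ x ≠ 0}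
      zero_mem' := ⟨1, SetLike.one_mem_graded 𝒜, one_ne_zero⟩
      add_mem' := by
        rintro a b ⟨x, hx, hx0⟩ ⟨y, hy, hy0⟩
        exact ⟨x * y, SetLike.mul_mem_graded hx hy,
          ((hfield x a hx hx0).mul (hfield y b hy hy0)).ne_zero⟩
      neg_mem' := by
        rintro a ⟨x, hx, hx0⟩
        obtain ⟨y, hy, hxy⟩ := inv_homog 𝒜 hx (hfield x a hx hx0)
        exact ⟨y, hy, fun h => by simp [h] at hxy⟩ }
  exact AddSubgroup.closure_le D' |>.mpr (fun a ha => ha) hg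

section Part1
variable [DecidableEq G] [Nontrivial k] {𝒜 : G → AddSubgroup k} [GradedRing 𝒜]
  {n : ℕ} {gv : Fin n → G}

lemma homog_is_monomial
    (hind : LinearIndependent ℤ
      (fun i : Fin n => (QuotientAddGroup.mk (gv i) : G ⧸ degSubgroup 𝒜)))
    {f : MvPolynomial (Fin n) k} (hf0 : f ≠ 0) (hf : MvHomog 𝒜 gv f) :
    ∃ (d : Fin n →₀ ℕ) (c : k), c ≠ 0 ∧ f = monomial d c := by
  classical
  obtain ⟨H, hH⟩ := hf
  have key : ∀ d d' : Fin n →₀ ℕ, coeff d f ≠ 0 → coeff d' f ≠ 0 → d = d' := by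
    intro d d' hd hd'
    have h1 : (H - ∑ i, (d i) • gv i) ∈ degSubgroup 𝒜 :=
      AddSubgroup.subset_closure ⟨coeff d f, hH d hd, hd⟩
    have h2 : (H - ∑ i, (d' i) • gv i) ∈ degSubgroup 𝒜 :=
      AddSubgroup.subset_closure ⟨coeff d' f, hH d' hd', hd'⟩
    have h3 : (∑ i, ((d i : ℤ) - (d' i : ℤ)) • gv i) ∈ degSubgroup 𝒜 := by
      have := AddSubgroup.sub_mem _ h2 h1
      have heq : (H - ∑ i, (d' i) • gv i) - (H - ∑ i, (d i) • gv i)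
          = ∑ i, ((d i : ℤ) - (d' i : ℤ)) • gv i := by
        rw [sub_sub_sub_cancel_left, ← Finset.sum_sub_distrib]
        congr 1
        ext i
        rw [sub_smul, natCast_zsmul, natCast_zsmul]
      rwa [heq] at this
    have h4 : ∑ i, ((d i : ℤ) - (d' i : ℤ)) •
        (QuotientAddGroup.mk (gv i) : G ⧸ degSubgroup 𝒜) = 0 := by
      have : ((QuotientAddGroup.mk' (degSubgroup 𝒜)) :
          G →+ G ⧸ degSubgroup 𝒜) (∑ i, ((d i : ℤ) - (d' i : ℤ)) • gv i) = 0 := by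
        rw [QuotientAddGroup.mk'_apply, QuotientAddGroup.eq_zero_iff]
        exact h3
      rw [map_sum] at this
      simpa only [map_zsmul, QuotientAddGroup.mk'_apply] using this
    have h5 := Fintype.linearIndependent_iff.mp hind
      (fun i => (d i : ℤ) - (d' i : ℤ)) h4
    ext i
    have h6 : (d i : ℤ) - (d' i : ℤ) = 0 := h5 i
    omega
  obtain ⟨d₀, hd₀⟩ := MvPolynomial.support_nonempty.mpr hf0 |>.exists_mem
  refine ⟨d₀, coeff d₀ f, MvPolynomial.mem_support_iff.mp hd₀, ?_⟩
  ext d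
  rw [MvPolynomial.coeff_monomial]
  by_cases h : d₀ = d
  · rw [if_pos h, h]
  · rw [if_neg h]
    by_contra hc
    exact h (key d₀ d (MvPolynomial.mem_support_iff.mp hd₀) hc)
end Part1

section Part1b
variable [DecidableEq G] [Nontrivial k] {𝒜 : G → AddSubgroup k} [GradedRing 𝒜]
  {n : ℕ} {gv : Fin n → G}

lemma homog_one : MvHomog 𝒜 gv (1 : MvPolynomial (Fin n) k) := by
  refine ⟨0, fun d hd => ?_⟩
  rw [MvPolynomial.coeff_one] at hd ⊢
  by_cases h : (0 : Fin n →₀ ℕ) = d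
  · subst h
    simp only [if_pos rfl]
    have : (0:G) - ∑ i, ((0 : Fin n →₀ ℕ) i) • gv i = 0 := by simp
    rw [this]
    exact SetLike.one_mem_graded 𝒜
  · simp [if_neg h] at hd

lemma homog_X (i : Fin n) : MvHomog 𝒜 gv (X i : MvPolynomial (Fin n) k) := by
  refine ⟨gv i, fun d hd => ?_⟩
  rw [MvPolynomial.coeff_X'] at hd ⊢
  by_cases h : Finsupp.single i 1 = d
  · subst h
    simp only [if_pos rfl]
    have : ∑ j, ((Finsupp.single i 1 : Fin n →₀ ℕ) j) • gv j = gv i := by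
      rw [Finset.sum_eq_single i]
      · simp
      · intro b _ hb
        rw [Finsupp.single_eq_of_ne' (Ne.symm hb)]
        simp
      · simp
    rw [this, sub_self]
    exact SetLike.one_mem_graded 𝒜
  · simp [if_neg h] at hd

lemma X_mem_homogMonoid (i : Fin n) : (X i : MvPolynomial (Fin n) k) ∈ homogMonoid 𝒜 gv :=
  Submonoid.subset_closure ⟨MvPolynomial.X_ne_zero i, homog_X i⟩

end Part1b

section Part1c
variable [DecidableEq G] [Nontrivial k] {𝒜 : G → AddSubgroup k} [GradedRing 𝒜]
  {n : ℕ} {gv : Fin n → G}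

theorem part1 (hfield : ∀ (x : k) (g' : G), x ∈ 𝒜 g' → x ≠ 0 → IsUnit x)
    (hind : LinearIndependent ℤ
      (fun i : Fin n => (QuotientAddGroup.mk (gv i) : G ⧸ degSubgroup 𝒜))) :
    GradedFG 𝒜 gv := by
  classical
  set R := MvPolynomial (Fin n) k with hR
  set L := Localization (homogMonoid 𝒜 gv) with hL
  set algL := algebraMap R L with halgL
  set zi : Fin n → L := fun i => Localization.mk 1 ⟨X i, X_mem_homogMonoid i⟩ with hzi
  have hXz : ∀ i, algL (X i) * zi i = 1 := by
    intro i
    rw [hzi, ← Localization.mk_one_eq_algebraMap, Localization.mk_mul, mul_one, one_mul]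
    exact Localization.mk_self (⟨X i, X_mem_homogMonoid i⟩ : homogMonoid 𝒜 gv)
  set s : Finset L := (Finset.univ.image fun i => algL (X i)) ∪ (Finset.univ.image zi)
    with hs
  refine ⟨s, ?_, ?_⟩
  · intro x hx
    rw [hs, Finset.mem_union] at hx
    rcases hx with hx | hx
    · obtain ⟨i, _, rfl⟩ := Finset.mem_image.mp hx
      exact ⟨X i, 1, homog_X i, homog_one, Submonoid.one_mem _, by
        rw [map_one, mul_one]⟩
    · obtain ⟨i, _, rfl⟩ := Finset.mem_image.mp hx
      refine ⟨1, X i, homog_one, homog_X i, X_mem_homogMonoid i, ?_⟩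
      rw [map_one, mul_comm] at *
      rw [hXz i]
  · rw [eq_top_iff]
    rintro x -
    set A := Algebra.adjoin k (s : Set L) with hA
    have hXA : ∀ i, algL (X i) ∈ A := fun i =>
      Algebra.subset_adjoin (by
        rw [hs]; exact Finset.mem_coe.mpr (Finset.mem_union_left _
          (Finset.mem_image.mpr ⟨i, Finset.mem_univ i, rfl⟩)))
    have hzA : ∀ i, zi i ∈ A := fun i =>
      Algebra.subset_adjoin (by
        rw [hs]; exact Finset.mem_coe.mpr (Finset.mem_union_right _
          (Finset.mem_image.mpr ⟨i, Finset.mem_univ i, rfl⟩)))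
    have halgA : ∀ r : R, algL r ∈ A := by
      intro r
      have h1 : r ∈ Algebra.adjoin k (Set.range (X : Fin n → R)) := by
        rw [MvPolynomial.adjoin_range_X]; trivial
      have h2 : algL r ∈ Algebra.adjoin k
          ((IsScalarTower.toAlgHom k R L) '' (Set.range (X : Fin n → R))) := by
        rw [← AlgHom.map_adjoin]
        exact ⟨r, h1, rfl⟩
      refine Algebra.adjoin_le ?_ h2
      rintro y ⟨_, ⟨i, rfl⟩, rfl⟩
      exact hXA i
    -- every inverse of a homogeneous denominator is in A
    have hbase : ∀ (f : R) (hm : f ∈ homogMonoid 𝒜 gv), f ≠ 0 → MvHomog 𝒜 gv f →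
        Localization.mk 1 ⟨f, hm⟩ ∈ A := by
      intro f hm hf0 hfh
      obtain ⟨H, hH⟩ := id hfh
      obtain ⟨d, c, hc0, rfl⟩ := homog_is_monomial hind hf0 hfh
      have hcoeff : coeff d (monomial d c) = c := by
        rw [MvPolynomial.coeff_monomial, if_pos rfl]
      have hcmem : c ∈ 𝒜 (H - ∑ i, (d i) • gv i) := by
        rw [← hcoeff]
        exact hH d (by rw [hcoeff]; exact hc0)
      obtain ⟨u, rfl⟩ := hfield c _ hcmem hc0
      set w : L := algebraMap k L ((u⁻¹ : kˣ) : k) * ∏ i, (zi i)^(d i) with hw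
      have hwA : w ∈ A := A.mul_mem (A.algebraMap_mem _)
        (A.prod_mem fun i _ => A.pow_mem (hzA i) _)
      have hfactor : (monomial d ((u:k)) : R) = C (u:k) * ∏ i, (X i : R) ^ d i := by
        rw [MvPolynomial.monomial_eq, Finsupp.prod_fintype]
        intro i
        exact pow_zero _
      have hkey : algL (monomial d ((u:k))) * w = 1 := by
        rw [hfactor, hw, map_mul, map_prod]
        have hC : algL (C ((u:k))) = algebraMap k L ((u:k)) := by
          rw [IsScalarTower.algebraMap_apply k R L, MvPolynomial.algebraMap_eq]
        rw [hC]
        simp only [map_pow]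
        rw [mul_mul_mul_comm, ← map_mul, Units.mul_inv, map_one, one_mul,
          ← Finset.prod_mul_distrib]
        refine Finset.prod_eq_one fun i _ => ?_
        rw [← mul_pow, hXz i, one_pow]
      have hinv1 : algL (monomial d ((u:k))) *
          Localization.mk 1 ⟨monomial d ((u:k)), hm⟩ = 1 := by
        rw [← Localization.mk_one_eq_algebraMap, Localization.mk_mul, one_mul, mul_one]
        exact Localization.mk_self (⟨monomial d ((u:k)), hm⟩ : homogMonoid 𝒜 gv)
      have heqw : Localization.mk 1 (⟨monomial d ((u:k)), hm⟩ : homogMonoid 𝒜 gv)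
          = w := by
        calc Localization.mk 1 (⟨monomial d ((u:k)), hm⟩ : homogMonoid 𝒜 gv)
            = Localization.mk 1 (⟨monomial d ((u:k)), hm⟩ : homogMonoid 𝒜 gv) *
              (algL (monomial d ((u:k))) * w) := by rw [hkey, mul_one]
          _ = (algL (monomial d ((u:k))) *
              Localization.mk 1 (⟨monomial d ((u:k)), hm⟩ : homogMonoid 𝒜 gv)) * w := by
              ring
          _ = w := by rw [hinv1, one_mul]
      rw [heqw]
      exact hwA
    have hinv : ∀ (q : R) (hq : q ∈ homogMonoid 𝒜 gv),
        Localization.mk 1 ⟨q, hq⟩ ∈ A := by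
      intro q hq
      induction hq using Submonoid.closure_induction with
      | mem f hf => exact hbase f _ hf.1 hf.2
      | one =>
        have h1 : (⟨(1:R), Submonoid.one_mem _⟩ : homogMonoid 𝒜 gv) = 1 := rfl
        rw [h1, Localization.mk_one]
        exact A.one_mem
      | mul a b ha hb iha ihb =>
        have h1 : Localization.mk 1 (⟨a*b, mul_mem ha hb⟩ : homogMonoid 𝒜 gv)
            = Localization.mk 1 ⟨a, ha⟩ * Localization.mk 1 ⟨b, hb⟩ := by
          rw [Localization.mk_mul, one_mul]
          rfl
        rw [h1]
        exact A.mul_mem iha ihb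
    refine Localization.induction_on x ?_
    rintro ⟨r, q⟩
    have : Localization.mk r q = algL r * Localization.mk 1 q := by
      rw [← Localization.mk_one_eq_algebraMap, Localization.mk_mul, mul_one, one_mul]
    rw [this]
    exact A.mul_mem (halgA r) (by
      have := hinv q.1 q.2
      simpa using this)
end Part1c

section AlgClosed
variable {E : Type*} [Field E] [IsAlgClosed E]

lemma exists_good_prime (cb : E) (hcb : cb ≠ 0) (M : ℕ) (hM : 1 ≤ M)
    (qp : Polynomial E) (hqp : qp ≠ 0) :
    ∃ p : ℕ, p.Prime ∧ ∃ t : E,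
      (∑ j ∈ Finset.range p, cb ^ (p - 1 - j) * t ^ (M * j)) = 0 ∧ qp.eval t ≠ 0 := by
  classical
  set hpoly : ℕ → Polynomial E := fun p =>
    ∑ j ∈ Finset.range p, Polynomial.C (cb ^ (p - 1 - j)) * Polynomial.X ^ (M * j)
    with hhp
  have heval : ∀ p t, (hpoly p).eval t = ∑ j ∈ Finset.range p, cb ^ (p-1-j) * t ^ (M*j) := by
    intro p t
    rw [hhp]
    simp [Polynomial.eval_finset_sum]
  have hcoeff : ∀ p : ℕ, 2 ≤ p → (hpoly p).coeff (M * (p-1)) = 1 := by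
    intro p hp
    rw [hhp]
    simp only [Polynomial.finset_sum_coeff, Polynomial.coeff_C_mul, Polynomial.coeff_X_pow]
    rw [Finset.sum_eq_single (p-1)]
    · rw [if_pos rfl, Nat.sub_self, pow_zero, mul_one]
    · intro b _ hb
      rw [if_neg, mul_zero]
      intro hMb
      exact hb (Nat.eq_of_mul_eq_mul_left (by omega) hMb).symm
    · intro hmem
      exact absurd (Finset.mem_range.mpr (by omega)) hmem
  have hroot : ∀ p : ℕ, p.Prime → ∃ t, (hpoly p).eval t = 0 := by
    intro p hp
    refine IsAlgClosed.exists_root _ ?_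
    intro hdeg
    have h0 := Polynomial.eq_C_of_degree_le_zero (le_of_eq hdeg)
    have h1 := hcoeff p hp.two_le
    rw [h0, Polynomial.coeff_C, if_neg (Nat.mul_ne_zero (by omega) (by have := hp.two_le; omega))] at h1
    exact zero_ne_one h1
  -- a common root of hpoly p and hpoly q for distinct primes p q is impossible
  have hdisj : ∀ p q : ℕ, p.Prime → q.Prime → p ≠ q → ∀ t : E,
      (hpoly p).eval t = 0 → (hpoly q).eval t = 0 → False := by
    intro p q hp hq hne t htp htq
    have key : ∀ r : ℕ, r.Prime → (hpoly r).eval t = 0 →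
        (t ^ M) ^ r = cb ^ r ∧ (t ^ M = cb → (r : E) = 0) := by
      intro r hr htr
      rw [heval] at htr
      have hgeom : (∑ j ∈ Finset.range r, (t ^ M) ^ j * cb ^ (r - 1 - j)) * (t ^ M - cb)
          = (t ^ M) ^ r - cb ^ r := geom_sum₂_mul _ _ _
      have hsum : (∑ j ∈ Finset.range r, (t ^ M) ^ j * cb ^ (r - 1 - j))
          = ∑ j ∈ Finset.range r, cb ^ (r-1-j) * t ^ (M*j) := by
        refine Finset.sum_congr rfl fun j _ => ?_
        rw [mul_comm, pow_mul]
      constructor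
      · rw [hsum, htr, zero_mul] at hgeom
        exact sub_eq_zero.mp hgeom.symm
      · intro htM
        have htr' : ∑ j ∈ Finset.range r, cb ^ (r-1-j) * cb ^ j = 0 := by
          rw [← htr]
          refine Finset.sum_congr rfl fun j hj => ?_
          rw [pow_mul, htM]
        have hconst : ∀ j ∈ Finset.range r, cb ^ (r-1-j) * cb ^ j = cb ^ (r-1) := by
          intro j hj
          rw [← pow_add]
          congr 1
          have := Finset.mem_range.mp hj
          omega
        rw [Finset.sum_congr rfl hconst, Finset.sum_const, Finset.card_range,
          nsmul_eq_mul] at htr'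
        rcases mul_eq_zero.mp htr' with h | h
        · exact h
        · exact absurd h (pow_ne_zero _ hcb)
    obtain ⟨hpow_p, hchar_p⟩ := key p hp htp
    obtain ⟨hpow_q, hchar_q⟩ := key q hq htq
    set w : E := t ^ M * cb⁻¹ with hwdef
    have hw_p : w ^ p = 1 := by
      rw [hwdef, mul_pow, hpow_p, inv_pow, mul_inv_cancel₀ (pow_ne_zero _ hcb)]
    have hw_q : w ^ q = 1 := by
      rw [hwdef, mul_pow, hpow_q, inv_pow, mul_inv_cancel₀ (pow_ne_zero _ hcb)]
    have hw1 : w = 1 := by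
      have h1 : orderOf w ∣ p := orderOf_dvd_of_pow_eq_one hw_p
      have h2 : orderOf w ∣ q := orderOf_dvd_of_pow_eq_one hw_q
      have h3 : orderOf w ∣ Nat.gcd p q := Nat.dvd_gcd h1 h2
      rw [Nat.Coprime.gcd_eq_one ((Nat.coprime_primes hp hq).mpr hne)] at h3
      rw [← orderOf_eq_one_iff]
      exact Nat.eq_one_of_dvd_one h3
    have htM : t ^ M = cb := by
      have : w * cb = cb := by rw [hw1, one_mul]
      rw [hwdef] at this
      field_simp at this
      exact this
    have hp0 : (p : E) = 0 := hchar_p htM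
    have hq0 : (q : E) = 0 := hchar_q htM
    have hcp : ringChar E = p := CharP.ringChar_of_prime_eq_zero hp hp0
    have hcq : ringChar E = q := CharP.ringChar_of_prime_eq_zero hq hq0
    exact hne (hcp ▸ hcq)
  -- choose a good prime
  by_contra hcon
  push_neg at hcon
  have hchoice : ∀ p : ℕ, p.Prime → ∃ t : E, (hpoly p).eval t = 0 ∧ qp.eval t = 0 := by
    intro p hp
    obtain ⟨t, ht⟩ := hroot p hp
    exact ⟨t, ht, hcon p hp t (by rw [← heval]; exact ht)⟩
  choose tf htf1 htf2 using fun (x : {p : ℕ // p.Prime}) => hchoice x.1 x.2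
  have hinj : Function.Injective tf := by
    intro a b hab
    by_contra hne
    exact hdisj a.1 b.1 a.2 b.2 (fun h => hne (Subtype.ext h)) (tf a)
      (htf1 a) (hab ▸ htf1 b)
  have hfin : Finite {p : ℕ // p.Prime} := by
    have hmap : ∀ x : {p : ℕ // p.Prime}, tf x ∈ qp.roots.toFinset := by
      intro x
      rw [Multiset.mem_toFinset, Polynomial.mem_roots hqp]
      exact htf2 x
    exact Finite.of_injective (fun x => (⟨tf x, hmap x⟩ : qp.roots.toFinset))
      (fun a b hab => hinj (congrArg Subtype.val hab))
  haveI : Infinite {p : ℕ // p.Prime} := Set.infinite_coe_iff.mpr Nat.infinite_setOf_prime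
  haveI := hfin
  exact not_finite {p : ℕ // p.Prime}
end AlgClosed

section Part2
variable [DecidableEq G] [Nontrivial k] {𝒜 : G → AddSubgroup k} [GradedRing 𝒜]
  {n : ℕ} {gv : Fin n → G}

set_option maxHeartbeats 1000000 in
theorem part2 (hfield : ∀ (x : k) (g' : G), x ∈ 𝒜 g' → x ≠ 0 → IsUnit x)
    (i : Fin n) (M : ℕ) (hM : 1 ≤ M) (c : k) (hc : c ∈ 𝒜 (M • gv i)) (hc0 : c ≠ 0) :
    ¬ GradedFG 𝒜 gv := by
  classical
  intro hFG
  set R := MvPolynomial (Fin n) k with hR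
  set L := Localization (homogMonoid 𝒜 gv) with hL
  set algL := algebraMap R L with halgL
  obtain ⟨s, hshom, hadj⟩ := hFG
  -- collect denominators
  choose pf qf hpf hqf hqmem heqf using fun (x : {x // x ∈ s}) => hshom x x.2
  set Q : R := ∏ x ∈ s.attach, qf x with hQdef
  have hQmem : Q ∈ homogMonoid 𝒜 gv := Submonoid.prod_mem _ fun x _ => hqmem x
  -- every element of L is p/Q^N
  have hmemAQ : ∀ y : L, ∃ (N : ℕ) (p' : R), y * (algL Q) ^ N = algL p' := by
    set AQ : Subalgebra k L :=
      { carrier := {y : L | ∃ (N : ℕ) (p' : R), y * (algL Q) ^ N = algL p'}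
        add_mem' := by
          rintro y1 y2 ⟨N1, p1, h1⟩ ⟨N2, p2, h2⟩
          refine ⟨N1 + N2, p1 * Q ^ N2 + p2 * Q ^ N1, ?_⟩
          have hr : (y1 + y2) * (algL Q) ^ (N1 + N2) =
              (y1 * algL Q ^ N1) * algL Q ^ N2 + (y2 * algL Q ^ N2) * algL Q ^ N1 := by
            ring
          rw [hr, h1, h2, ← map_pow, ← map_pow, ← map_mul, ← map_mul, ← map_add]
        mul_mem' := by
          rintro y1 y2 ⟨N1, p1, h1⟩ ⟨N2, p2, h2⟩
          refine ⟨N1 + N2, p1 * p2, ?_⟩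
          have hr : (y1 * y2) * (algL Q) ^ (N1 + N2) =
              (y1 * algL Q ^ N1) * (y2 * algL Q ^ N2) := by ring
          rw [hr, h1, h2, ← map_mul]
        algebraMap_mem' := by
          intro a
          refine ⟨0, C a, ?_⟩
          rw [pow_zero, mul_one, IsScalarTower.algebraMap_apply k R L,
            MvPolynomial.algebraMap_eq] }
    intro y
    have hy : y ∈ AQ := by
      have hsA : Algebra.adjoin k (s : Set L) ≤ AQ := by
        refine Algebra.adjoin_le ?_
        intro x hx
        refine ⟨1, pf ⟨x, hx⟩ * ∏ z ∈ s.attach.erase ⟨x, hx⟩, qf z, ?_⟩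
        have hQsplit : Q = qf ⟨x, hx⟩ * ∏ z ∈ s.attach.erase ⟨x, hx⟩, qf z :=
          (Finset.mul_prod_erase s.attach qf (Finset.mem_attach s ⟨x, hx⟩)).symm
        rw [pow_one, hQsplit, map_mul, ← mul_assoc, heqf ⟨x, hx⟩, ← map_mul]
      exact hsA (by rw [hadj]; trivial)
    exact hy
  -- the residue field and reduction
  obtain ⟨𝔪, h𝔪⟩ := Ideal.exists_maximal k
  haveI := h𝔪
  letI F := k ⧸ 𝔪
  letI : Field F := Ideal.Quotient.field 𝔪
  set φ : k →+* F := Ideal.Quotient.mk 𝔪 with hφ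
  have hφu : ∀ x : k, IsUnit x → φ x ≠ 0 := fun x hx => (hx.map φ).ne_zero
  set red : MvPolynomial (Fin n) k →+* MvPolynomial (Fin n) F := MvPolynomial.map φ
    with hred
  -- reductions of homogeneous elements are nonzero
  have hredhom : ∀ f : R, f ≠ 0 → MvHomog 𝒜 gv f → red f ≠ 0 := by
    intro f hf0 ⟨H, hH⟩ hred0
    obtain ⟨d, hd⟩ := (MvPolynomial.support_nonempty.mpr hf0).exists_mem
    have hdc := MvPolynomial.mem_support_iff.mp hd
    have : coeff d (red f) = φ (coeff d f) := MvPolynomial.coeff_map φ f d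
    rw [hred0] at this
    exact hφu _ (hfield _ _ (hH d hdc) hdc) (by
      rw [← this, MvPolynomial.coeff_zero])
  have hredS : ∀ q ∈ homogMonoid 𝒜 gv, red q ≠ 0 := by
    intro q hq
    induction hq using Submonoid.closure_induction with
    | mem f hf => exact hredhom f hf.1 hf.2
    | one => rw [map_one]; exact one_ne_zero
    | mul a b ha hb iha ihb => rw [map_mul]; exact mul_ne_zero iha ihb
  -- the big algebraically closed field
  letI K := FractionRing (MvPolynomial (Fin n) F)
  letI E := AlgebraicClosure K
  set ι : MvPolynomial (Fin n) F →+* E :=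
    (algebraMap K E).comp (algebraMap (MvPolynomial (Fin n) F) K) with hι
  have hιinj : Function.Injective ι := by
    rw [hι, RingHom.coe_comp]
    exact (RingHom.injective _).comp (IsFractionRing.injective (MvPolynomial (Fin n) F) K)
  -- the evaluation into Polynomial E
  set Φ : MvPolynomial (Fin n) F →+* Polynomial E :=
    MvPolynomial.eval₂Hom ((Polynomial.C).comp (ι.comp (MvPolynomial.C)))
      (fun j => if j = i then Polynomial.X else Polynomial.C (ι (X j))) with hΦ
  have hcomp : (Polynomial.evalRingHom (ι (X i))).comp Φ = ι := by
    apply MvPolynomial.ringHom_ext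
    · intro a
      simp [hΦ]
    · intro j
      by_cases hj : j = i
      · subst hj; simp [hΦ]
      · simp [hΦ, hj]
  have hΦne : ∀ f : MvPolynomial (Fin n) F, f ≠ 0 → Φ f ≠ 0 := by
    intro f hf0 hΦ0
    apply hf0
    apply hιinj
    rw [map_zero]
    have := congrArg (fun (ψ : MvPolynomial (Fin n) F →+* E) => ψ f) hcomp
    simp only [RingHom.comp_apply] at this
    rw [← this, hΦ0, map_zero]
  -- the constant cb
  set cb : E := ι (MvPolynomial.C (φ c)) with hcbdef
  have hcb0 : cb ≠ 0 := by
    have hφc : φ c ≠ 0 := hφu c (hfield c _ hc hc0)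
    intro h0
    apply hφc
    have hC0 : MvPolynomial.C (φ c) = (0 : MvPolynomial (Fin n) F) :=
      hιinj (by rw [map_zero]; exact h0)
    exact (MvPolynomial.C_injective (Fin n) F) (by rw [hC0, map_zero])
  set qp : Polynomial E := Φ (red Q) with hqpdef
  have hqp0 : qp ≠ 0 := hΦne _ (hredS Q hQmem)
  obtain ⟨p, hprime, t, htsum, htq⟩ := exists_good_prime cb hcb0 M hM qp hqp0
  -- the homogeneous polynomial h
  set hh : R := ∑ j ∈ Finset.range p, monomial (Finsupp.single i (M*j)) (c^(p-1-j))
    with hhdef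
  have hcoeffh : ∀ d, coeff d hh =
      ∑ j ∈ Finset.range p, if Finsupp.single i (M*j) = d then c^(p-1-j) else 0 := by
    intro d
    rw [hhdef, MvPolynomial.coeff_sum]
    exact Finset.sum_congr rfl fun j _ => MvPolynomial.coeff_monomial _ _ _
  have hsingle_inj : ∀ j j' : ℕ,
      Finsupp.single i (M*j) = Finsupp.single (α := Fin n) i (M*j') → j = j' := by
    intro j j' hjj
    have h1 : M * j = M * j' := by
      have := congrArg (fun f : Fin n →₀ ℕ => f i) hjj
      simpa [Finsupp.single_eq_same] using this
    exact Nat.eq_of_mul_eq_mul_left (by omega) h1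
  have hcoeff_at : ∀ j ∈ Finset.range p,
      coeff (Finsupp.single i (M*j)) hh = c^(p-1-j) := by
    intro j hj
    rw [hcoeffh, Finset.sum_eq_single j]
    · rw [if_pos rfl]
    · intro b _ hb
      exact if_neg (fun h => hb (hsingle_inj b j h))
    · intro h
      exact absurd hj h
  have hh0 : hh ≠ 0 := by
    intro h0
    have h1 := hcoeff_at (p-1) (Finset.mem_range.mpr (by have := hprime.two_le; omega))
    rw [h0, MvPolynomial.coeff_zero, Nat.sub_self, pow_zero] at h1
    exact one_ne_zero h1.symm
  have hhhom : MvHomog 𝒜 gv hh := by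
    refine ⟨((p-1)*M) • gv i, fun d hd => ?_⟩
    have hex : ∃ j ∈ Finset.range p, Finsupp.single i (M*j) = d := by
      by_contra hno
      push_neg at hno
      exact hd (by rw [hcoeffh]; exact Finset.sum_eq_zero fun j hj => if_neg (hno j hj))
    obtain ⟨j, hj, rfl⟩ := hex
    rw [hcoeff_at j hj]
    have hsum : ∑ i', ((Finsupp.single i (M*j) : Fin n →₀ ℕ) i') • gv i' = (M*j) • gv i := by
      rw [Finset.sum_eq_single i]
      · rw [Finsupp.single_eq_same]
      · intro b _ hb
        rw [Finsupp.single_eq_of_ne' (Ne.symm hb), zero_smul]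
      · intro h
        exact absurd (Finset.mem_univ i) h
    rw [hsum]
    have hmem := SetLike.pow_mem_graded (p-1-j) hc
    have hsplit : (p-1)*M = (p-1-j)*M + M*j := by
      rw [mul_comm M j, ← Nat.add_mul, Nat.sub_add_cancel (by
        have := Finset.mem_range.mp hj
        omega)]
    have heqdeg : ((p-1)*M) • gv i - (M*j) • gv i = (p-1-j) • (M • gv i) := by
      rw [smul_smul, hsplit, add_nsmul, add_sub_cancel_right]
    rw [heqdeg]
    exact hmem
  have hhmem : hh ∈ homogMonoid 𝒜 gv := Submonoid.subset_closure ⟨hh0, hhhom⟩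
  -- clear denominators
  obtain ⟨N, p', hzq⟩ := hmemAQ (Localization.mk 1 ⟨hh, hhmem⟩)
  have hinvh : algL hh * Localization.mk 1 ⟨hh, hhmem⟩ = 1 := by
    rw [halgL, ← Localization.mk_one_eq_algebraMap, Localization.mk_mul, one_mul, mul_one]
    exact Localization.mk_self (⟨hh, hhmem⟩ : homogMonoid 𝒜 gv)
  have hQN : algL (Q ^ N) = algL (hh * p') := by
    rw [map_pow, map_mul]
    calc algL Q ^ N
        = (algL hh * Localization.mk 1 ⟨hh, hhmem⟩) * algL Q ^ N := by rw [hinvh, one_mul]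
      _ = algL hh * (Localization.mk 1 ⟨hh, hhmem⟩ * algL Q ^ N) := by ring
      _ = algL hh * algL p' := by rw [hzq]
  obtain ⟨c₀, hc₀⟩ := (IsLocalization.eq_iff_exists (M := homogMonoid 𝒜 gv) (S := L)).mp hQN
  have hredeq : red (Q ^ N) = red (hh * p') := by
    have h1 := congrArg red hc₀
    rw [map_mul, map_mul] at h1
    exact mul_left_cancel₀ (hredS c₀ c₀.2) h1
  -- push to E
  have hΦh : Polynomial.eval t (Φ (red hh)) = ∑ j ∈ Finset.range p, cb^(p-1-j) * t^(M*j) := by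
    rw [hhdef, hred]
    rw [map_sum, map_sum, Polynomial.eval_finset_sum]
    refine Finset.sum_congr rfl fun j hj => ?_
    rw [MvPolynomial.map_monomial]
    have hev : Φ (monomial (Finsupp.single i (M*j)) (φ (c^(p-1-j))))
        = Polynomial.C (cb^(p-1-j)) * Polynomial.X^(M*j) := by
      rw [hΦ, MvPolynomial.eval₂Hom_monomial]
      congr 1
      · rw [hcbdef, ← map_pow, ← map_pow, ← map_pow]
        rfl
      · rw [Finsupp.prod_single_index (by rw [pow_zero]), if_pos rfl]
    rw [hev]
    rw [Polynomial.eval_mul, Polynomial.eval_C, Polynomial.eval_pow, Polynomial.eval_X]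
  have happ := congrArg (fun g => Polynomial.eval t (Φ g)) hredeq
  simp only [map_pow, map_mul, Polynomial.eval_pow, Polynomial.eval_mul] at happ
  rw [hΦh, htsum, zero_mul] at happ
  exact pow_ne_zero N htq happ
end Part2


/-- The graded fraction field `k(g⁻¹T)` is a finitely generated graded `k`-algebra
if the family `g` is independent of `ρ(k)`; conversely if some `g_i` is dependent on
`ρ(k)` then it is not finitely generated. -/
theorem stmt6 [DecidableEq G] [Nontrivial k]
    (𝒜 : G → AddSubgroup k) [GradedRing 𝒜]
    (hfield : ∀ (x : k) (g' : G), x ∈ 𝒜 g' → x ≠ 0 → IsUnit x)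
    (n : ℕ) (hn : 1 ≤ n) (gv : Fin n → G) :
    (LinearIndependent ℤ
        (fun i : Fin n => (QuotientAddGroup.mk (gv i) : G ⧸ degSubgroup 𝒜)) →
      GradedFG 𝒜 gv) ∧
    (∀ i : Fin n, (∃ m : ℤ, m ≠ 0 ∧ m • gv i ∈ degSubgroup 𝒜) → ¬ GradedFG 𝒜 gv) := by
  constructor
  · exact part1 hfield
  · rintro i ⟨m, hm0, hmg⟩
    have habs : ((m.natAbs : ℤ)) • gv i ∈ degSubgroup 𝒜 := by
      rcases Int.natAbs_eq m with h | h
      · have h2 := hmg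
        rw [h] at h2
        exact h2
      · rw [h] at hmg
        have h2 := AddSubgroup.neg_mem _ hmg
        rwa [← neg_smul, neg_neg] at h2
    obtain ⟨c, hc, hc0⟩ := exists_of_mem_degSubgroup hfield habs
    refine part2 hfield i m.natAbs (Int.natAbs_pos.mpr hm0) c ?_ hc0
    rwa [natCast_zsmul] at hc
end

section
/- Let X be a locally compact, Hausdorff, paracompact, locally connected, Fréchet–Urysohn topological space. Then every countably compact subset of X is compact. -/
open Filter Topology

theorem stmt12 {X : Type*} [TopologicalSpace X] [LocallyCompactSpace X] [T2Space X]
    [ParacompactSpace X] [LocallyConnectedSpace X] [FrechetUrysohnSpace X]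
    (A : Set X)
    (hA : ∀ u : ℕ → X, (∀ n, u n ∈ A) → ∃ x ∈ A, MapClusterPt x atTop u) :
    IsCompact A := by
  -- A is closed
  have hAc : IsClosed A := by
    refine IsSeqClosed.isClosed ?_
    intro u p hu hup
    obtain ⟨x, hxA, hx⟩ := hA u hu
    have hxp : x = p := by
      have h1 : ClusterPt x (𝓝 p) := ClusterPt.mono hx hup
      exact t2_iff_nhds.mp ‹T2Space X› h1
    exact hxp ▸ hxA
  -- cover by interiors of compact sets
  choose K hKc hKn using fun x : X => exists_compact_mem_nhds x
  have hcov : ⋃ x, interior (K x) = Set.univ := by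
    refine Set.eq_univ_of_forall fun x => Set.mem_iUnion.2 ⟨x, ?_⟩
    exact mem_interior_iff_mem_nhds.2 (hKn x)
  obtain ⟨v, hvo, hvcov, hvlf, hvsub⟩ :=
    precise_refinement (fun x => interior (K x)) (fun _ => isOpen_interior) hcov
  -- A meets only finitely many v i
  have hSfin : {i | (A ∩ v i).Nonempty}.Finite := by
    by_contra hinf
    have hinf' : {i | (A ∩ v i).Nonempty}.Infinite := hinf
    set f := hinf'.natEmbedding with hf
    have hsel : ∀ n : ℕ, ∃ y, y ∈ A ∩ v (f n) := fun n => (f n).2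
    choose u hu using hsel
    obtain ⟨x, hxA, hx⟩ := hA u fun n => (hu n).1
    obtain ⟨W, hWx, hWfin⟩ := hvlf x
    have hfreq : {n : ℕ | u n ∈ W}.Infinite :=
      Nat.frequently_atTop_iff_infinite.mp (mapClusterPt_iff_frequently.1 hx W hWx)
    have himg : ((fun n => (f n : X)) '' {n | u n ∈ W}).Infinite := by
      refine hfreq.image ?_
      intro a ha b hb hab
      exact f.injective (Subtype.ext hab)
    refine himg (hWfin.subset ?_)
    rintro _ ⟨n, hn, rfl⟩
    exact ⟨u n, (hu n).2, hn⟩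
  -- A is contained in a finite union of compact closures
  have hKcomp : ∀ i, IsCompact (closure (v i)) := fun i => by
    rcases hvsub i with hsub
    exact (hKc i).closure_of_subset (hsub.trans interior_subset)
  have hAsub : A ⊆ ⋃ i ∈ hSfin.toFinset, closure (v i) := by
    intro a ha
    have : a ∈ ⋃ i, v i := hvcov ▸ Set.mem_univ a
    obtain ⟨i, hi⟩ := Set.mem_iUnion.1 this
    refine Set.mem_biUnion ?_ (subset_closure hi)
    exact hSfin.mem_toFinset.2 ⟨a, ha, hi⟩
  exact IsCompact.of_isClosed_subset (hSfin.toFinset.isCompact_biUnion fun i _ => hKcomp i)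
    hAc hAsub
end

section
/- Let k be a complete ultrametric valued field and r > 0 with r ∉ √|k*| (r is not a root of any value of a nonzero element of k; i.e., rⁿ ∉ |k*| for all integers n ≥ 1). Then the norm ‖Σ_{m∈ℤ} a_m T^m‖_r = max_m(|a_m| r^m) on the field k_r of bilateral series Σ_{m∈ℤ} a_m T^m with (|a_m|r^m) summable is multiplicative. -/
open IsUltrametricDist

/-- Strict maximizer for a summable nonnegative function with distinct nonzero values. -/
lemma aux_strict_max {u : ℤ → ℝ} (hu : Summable u) (hnn : ∀ m, 0 ≤ u m)
    (hdist : ∀ m m' : ℤ, m ≠ m' → u m ≠ 0 → u m' ≠ 0 → u m ≠ u m')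
    {m₁ : ℤ} (h1 : 0 < u m₁) :
    ∃ m₀, 0 < u m₀ ∧ ∀ m, m ≠ m₀ → u m < u m₀ := by
  have hten := hu.tendsto_cofinite_zero
  have hfin : {m : ℤ | u m₁ ≤ u m}.Finite := by
    have := hten.eventually (Filter.Tendsto.eventually_lt_const h1 Filter.tendsto_id)
    rw [Filter.eventually_cofinite] at this
    exact this.subset (fun m hm => not_lt.mpr hm)
  have hne : m₁ ∈ hfin.toFinset := by simp
  obtain ⟨m₀, hm₀S, hm₀max⟩ := hfin.toFinset.exists_max_image u ⟨m₁, hne⟩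
  have hm₀pos : 0 < u m₀ := lt_of_lt_of_le h1 (by simpa using hm₀S)
  refine ⟨m₀, hm₀pos, fun m hm => ?_⟩
  by_cases hmS : m ∈ hfin.toFinset
  · have hle := hm₀max m hmS
    rcases lt_or_eq_of_le hle with h | h
    · exact h
    · exact absurd h (hdist m m₀ hm (by
        have : u m₁ ≤ u m := by simpa using hmS
        exact (lt_of_lt_of_le h1 this).ne') hm₀pos.ne')
  · have : u m < u m₁ := by
      by_contra hc
      exact hmS (by simp [not_lt.mp hc])
    exact this.trans_le (by simpa using hm₀S)

/-- In a complete ultrametric field, if one term strictly dominates all others,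
the norm of the sum equals the norm of that term. -/
lemma aux_tsum_norm_eq {k : Type*} [NormedField k] [CompleteSpace k] [IsUltrametricDist k]
    {v : ℤ → k} (hv : Summable v) {i₀ : ℤ}
    (hlt : ∀ i, i ≠ i₀ → ‖v i‖ < ‖v i₀‖) : ‖∑' i, v i‖ = ‖v i₀‖ := by
  classical
  have hpos : 0 < ‖v i₀‖ := lt_of_le_of_lt (norm_nonneg (v (i₀ + 1))) (hlt _ (by omega))
  set w : ℤ → k := fun i => if i = i₀ then 0 else v i with hw
  have hws : Summable w := by
    have h1 : Summable (fun i : ℤ => if i = i₀ then v i else 0) :=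
      summable_of_ne_finset_zero (s := {i₀}) (by intro b hb; simp at hb; simp [hb])
    have h2 := hv.sub h1
    apply h2.congr
    intro i
    by_cases h : i = i₀ <;> simp [hw, h]
  have hwlt : ∀ i, ‖w i‖ < ‖v i₀‖ := by
    intro i
    by_cases h : i = i₀ <;> simp [hw, h, hpos, hlt i]
  -- find a uniform strict bound
  have hten : Filter.Tendsto (fun i => ‖w i‖) Filter.cofinite (nhds 0) := by
    simpa using hws.tendsto_cofinite_zero.norm
  have hfin : {i : ℤ | ‖v i₀‖ / 2 ≤ ‖w i‖}.Finite := by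
    have := hten.eventually (Filter.Tendsto.eventually_lt_const (by linarith : (0:ℝ) < ‖v i₀‖ / 2)
      Filter.tendsto_id)
    rw [Filter.eventually_cofinite] at this
    exact this.subset (fun m hm => not_lt.mpr hm)
  set F := insert i₀ hfin.toFinset with hF
  have hFne : F.Nonempty := ⟨i₀, Finset.mem_insert_self _ _⟩
  set C : ℝ := max (‖v i₀‖ / 2) (F.sup' hFne fun i => ‖w i‖) with hC
  have hCnn : 0 ≤ C := le_trans (by positivity) (le_max_left _ _)
  have hClt : C < ‖v i₀‖ := by
    apply max_lt (by linarith)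
    rw [Finset.sup'_lt_iff]
    intro i _
    exact hwlt i
  have hball : ∀ i, ‖w i‖ ≤ C := by
    intro i
    by_cases h : i ∈ F
    · exact le_trans (Finset.le_sup' (fun i => ‖w i‖) h) (le_max_right _ _)
    · refine le_trans (le_of_lt ?_) (le_max_left _ _)
      by_contra hc
      exact h (Finset.mem_insert_of_mem (by simpa [hF] using not_lt.mp hc))
  have hsum : ∑' i, v i = v i₀ + ∑' i, w i := Summable.tsum_eq_add_tsum_ite hv i₀
  have hrest : ‖∑' i, w i‖ ≤ C := norm_tsum_le_of_forall_le_of_nonneg hCnn hball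
  rw [hsum, norm_add_eq_max_of_norm_ne_norm (by
    intro hEq
    exact absurd hEq.symm (ne_of_lt (lt_of_le_of_lt hrest hClt)))]
  exact max_eq_left (le_of_lt (lt_of_le_of_lt hrest hClt))

/-- Distinct indices with nonzero coefficients give distinct values `‖φ m‖ r^m`. -/
lemma aux_key {k : Type*} [NormedField k]
    (r : ℝ) (hr : 0 < r)
    (hroot : ∀ n : ℕ, n ≠ 0 → ∀ c : k, c ≠ 0 → r ^ n ≠ ‖c‖)
    (φ : ℤ → k) {m m' : ℤ} (hlt : m' < m) (hφm : φ m ≠ 0) (hφm' : φ m' ≠ 0)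
    (hEq : ‖φ m‖ * r ^ m = ‖φ m'‖ * r ^ m') : False := by
  have hrne : r ≠ 0 := hr.ne'
  have hnm : ‖φ m‖ ≠ 0 := norm_ne_zero_iff.mpr hφm
  have key : r ^ ((m - m').toNat) = ‖φ m' / (φ m)‖ := by
    have h1 : (r : ℝ) ^ ((m - m').toNat : ℤ) = r ^ m * (r ^ m')⁻¹ := by
      rw [Int.toNat_of_nonneg (by omega : 0 ≤ m - m'), zpow_sub₀ hrne]
      ring
    have h2 : ‖φ m' / φ m‖ = ‖φ m'‖ / ‖φ m‖ := norm_div _ _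
    rw [← zpow_natCast r, h1, h2]
    have hrm' : (0:ℝ) < r ^ m' := zpow_pos hr m'
    field_simp
    nlinarith [zpow_pos hr m, norm_nonneg (φ m'), hEq]
  exact hroot ((m - m').toNat) (by omega) _ (div_ne_zero hφm' hφm) key

/-- The field `k_r` of bilateral series: its norm `‖Σ a_m T^m‖_r = sup_m |a_m| r^m`
is multiplicative when `r ∉ √|k*|`.  Multiplication is the convolution product. -/
theorem stmt17 {k : Type*} [NormedField k] [CompleteSpace k] [IsUltrametricDist k]
    (r : ℝ) (hr : 0 < r)
    (hroot : ∀ n : ℕ, n ≠ 0 → ∀ c : k, c ≠ 0 → r ^ n ≠ ‖c‖)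
    (f g : ℤ → k)
    (hf : Summable fun m : ℤ => ‖f m‖ * r ^ m)
    (hg : Summable fun m : ℤ => ‖g m‖ * r ^ m) :
    (⨆ m : ℤ, ‖∑' i : ℤ, f i * g (m - i)‖ * r ^ m) =
      (⨆ m : ℤ, ‖f m‖ * r ^ m) * ⨆ m : ℤ, ‖g m‖ * r ^ m := by
  have hrne : r ≠ 0 := hr.ne'
  -- trivial cases
  by_cases hf0 : ∀ m, f m = 0
  · simp [hf0, Real.iSup_const_zero]
  by_cases hg0 : ∀ m, g m = 0
  · simp [hg0, Real.iSup_const_zero]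
  push_neg at hf0 hg0
  obtain ⟨m₁, hm₁⟩ := hf0
  obtain ⟨n₁, hn₁⟩ := hg0
  -- distinctness of values
  have hdist : ∀ (φ : ℤ → k), ∀ m m' : ℤ, m ≠ m' → ‖φ m‖ * r ^ m ≠ 0 →
      ‖φ m'‖ * r ^ m' ≠ 0 → ‖φ m‖ * r ^ m ≠ ‖φ m'‖ * r ^ m' := by
    intro φ m m' hne hm hm'
    have hφm : φ m ≠ 0 := by
      intro h; exact hm (by simp [h])
    have hφm' : φ m' ≠ 0 := by
      intro h; exact hm' (by simp [h])
    rcases hne.lt_or_gt with hlt | hlt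
    · intro hEq
      exact aux_key r hr hroot φ hlt hφm' hφm hEq.symm
    · intro hEq
      exact aux_key r hr hroot φ hlt hφm hφm' hEq
  -- strict maximizers
  obtain ⟨m₀, hm₀pos, hm₀⟩ := aux_strict_max hf (fun m => by positivity) (hdist f)
    (mul_pos (norm_pos_iff.mpr hm₁) (zpow_pos hr m₁))
  obtain ⟨n₀, hn₀pos, hn₀⟩ := aux_strict_max hg (fun m => by positivity) (hdist g)
    (mul_pos (norm_pos_iff.mpr hn₁) (zpow_pos hr n₁))
  set Mf : ℝ := ‖f m₀‖ * r ^ m₀ with hMf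
  set Mg : ℝ := ‖g n₀‖ * r ^ n₀ with hMg
  have hfle : ∀ m, ‖f m‖ * r ^ m ≤ Mf := fun m => by
    rcases eq_or_ne m m₀ with h | h
    · rw [h]
    · exact (hm₀ m h).le
  have hgle : ∀ m, ‖g m‖ * r ^ m ≤ Mg := fun m => by
    rcases eq_or_ne m n₀ with h | h
    · rw [h]
    · exact (hn₀ m h).le
  have hMfSup : (⨆ m : ℤ, ‖f m‖ * r ^ m) = Mf := by
    apply le_antisymm (ciSup_le hfle)
    exact le_ciSup ⟨Mf, by rintro x ⟨m, rfl⟩; exact hfle m⟩ m₀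
  have hMgSup : (⨆ m : ℤ, ‖g m‖ * r ^ m) = Mg := by
    apply le_antisymm (ciSup_le hgle)
    exact le_ciSup ⟨Mg, by rintro x ⟨m, rfl⟩; exact hgle m⟩ n₀
  rw [hMfSup, hMgSup]
  -- term bounds for the convolution
  have hterm : ∀ m i : ℤ, ‖f i * g (m - i)‖ = (‖f i‖ * r ^ i) * (‖g (m-i)‖ * r ^ (m-i)) *
      (r ^ m)⁻¹ := by
    intro m i
    have h : r ^ i * r ^ (m - i) = r ^ m := by
      rw [← zpow_add₀ hrne]; ring_nf
    rw [norm_mul]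
    have h2 : (‖f i‖ * r ^ i) * (‖g (m-i)‖ * r ^ (m-i)) * (r ^ m)⁻¹
        = ‖f i‖ * ‖g (m-i)‖ * ((r ^ i * r ^ (m-i)) * (r ^ m)⁻¹) := by ring
    rw [h2, h, mul_inv_cancel₀ (zpow_pos hr m).ne', mul_one]
  have hsummable : ∀ m : ℤ, Summable fun i => f i * g (m - i) := by
    intro m
    apply Summable.of_norm
    apply Summable.of_nonneg_of_le (fun i => norm_nonneg _)
      (f := fun i => (‖f i‖ * r ^ i) * (Mg * (r ^ m)⁻¹)) (fun i => ?_)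
    · exact hf.mul_right _
    · rw [hterm m i]
      have h1 : 0 ≤ ‖f i‖ * r ^ i := by positivity
      have h2 : 0 ≤ (r ^ m : ℝ)⁻¹ := by positivity
      calc (‖f i‖ * r ^ i) * (‖g (m-i)‖ * r ^ (m-i)) * (r ^ m)⁻¹
          ≤ (‖f i‖ * r ^ i) * Mg * (r ^ m)⁻¹ := by
            apply mul_le_mul_of_nonneg_right _ h2
            exact mul_le_mul_of_nonneg_left (hgle _) h1
        _ = (‖f i‖ * r ^ i) * (Mg * (r ^ m)⁻¹) := by ring
  have hub : ∀ m : ℤ, ‖∑' i : ℤ, f i * g (m - i)‖ * r ^ m ≤ Mf * Mg := by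
    intro m
    have hb : ‖∑' i : ℤ, f i * g (m - i)‖ ≤ Mf * Mg * (r ^ m)⁻¹ := by
      apply norm_tsum_le_of_forall_le_of_nonneg (by positivity)
      intro i
      rw [hterm m i]
      apply mul_le_mul_of_nonneg_right _ (by positivity)
      exact mul_le_mul (hfle i) (hgle _) (by positivity) (le_of_lt (by positivity))
    calc ‖∑' i : ℤ, f i * g (m - i)‖ * r ^ m ≤ (Mf * Mg * (r ^ m)⁻¹) * r ^ m := by
          apply mul_le_mul_of_nonneg_right hb (zpow_pos hr m).le
      _ = Mf * Mg := by field_simp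
  -- the value at m₀ + n₀
  have hkey : ‖∑' i : ℤ, f i * g (m₀ + n₀ - i)‖ * r ^ (m₀ + n₀) = Mf * Mg := by
    have heq : ‖∑' i : ℤ, f i * g (m₀ + n₀ - i)‖ = ‖f m₀ * g (m₀ + n₀ - m₀)‖ := by
      apply aux_tsum_norm_eq (hsummable (m₀ + n₀))
      intro i hi
      rw [hterm (m₀ + n₀) i, hterm (m₀ + n₀) m₀]
      apply mul_lt_mul_of_pos_right _ (by positivity)
      have h1 : ‖f i‖ * r ^ i < Mf := hm₀ i hi
      have h2 : ‖g (m₀ + n₀ - i)‖ * r ^ (m₀ + n₀ - i) ≤ Mg := hgle _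
      have h3 : ‖g (m₀ + n₀ - m₀)‖ * r ^ (m₀ + n₀ - m₀) = Mg := by
        have he : m₀ + n₀ - m₀ = n₀ := by omega
        rw [he]
      calc (‖f i‖ * r ^ i) * (‖g (m₀ + n₀ - i)‖ * r ^ (m₀ + n₀ - i))
          ≤ (‖f i‖ * r ^ i) * Mg := mul_le_mul_of_nonneg_left h2 (by positivity)
        _ < Mf * Mg := mul_lt_mul_of_pos_right h1 hn₀pos
        _ = (‖f m₀‖ * r ^ m₀) * (‖g (m₀ + n₀ - m₀)‖ * r ^ (m₀ + n₀ - m₀)) := by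
            rw [h3]
    rw [heq, hterm (m₀ + n₀) m₀]
    have h3 : ‖g (m₀ + n₀ - m₀)‖ * r ^ (m₀ + n₀ - m₀) = Mg := by
      have : m₀ + n₀ - m₀ = n₀ := by omega
      rw [this]
    rw [h3, ← hMf]
    field_simp
  -- conclude
  apply le_antisymm
  · exact ciSup_le hub
  · calc Mf * Mg = ‖∑' i : ℤ, f i * g (m₀ + n₀ - i)‖ * r ^ (m₀ + n₀) := hkey.symm
      _ ≤ ⨆ m : ℤ, ‖∑' i : ℤ, f i * g (m - i)‖ * r ^ m :=
          le_ciSup ⟨Mf * Mg, by rintro x ⟨m, rfl⟩; exact hub m⟩ (m₀ + n₀)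
end
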